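/- arXiv:1403.0509 — 5 statements merged into one kernel-verified Lean document; each statement's English description precedes it below -/
import Mathlib

section
/- There is an absolute constant C such that for every unary language L ⊆ {a}* admitting an indicator pair of size m, there exists a udpda A of size at most C·m with L(A) = L. -/
/-- A straight-line program in Chomsky normal form over alphabet `α`:
nonterminals are `Fin n`, each production is either a terminal or a pair of
nonterminals with strictly smaller indices (this index condition is a
topological ordering witnessing acyclicity of the SLP).  The size of such an
SLP is its number `n` of nonterminals. -/
structure CnfSLP (α : Type) where
  n : ℕ
  ax : Fin n
  prod : Fin n → α ⊕ (Fin n × Fin n)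
  wf : ∀ (i B C : Fin n), prod i = Sum.inr (B, C) → B < i ∧ C < i

namespace CnfSLP

variable {α : Type}

/-- The word generated by nonterminal `i`. -/
def strAt (P : CnfSLP α) : Fin P.n → List α
  | i =>
    match h : P.prod i with
    | Sum.inl a => [a]
    | Sum.inr (B, C) => P.strAt B ++ P.strAt C
termination_by i => i.val
decreasing_by
  · exact (P.wf i B C h).1
  · exact (P.wf i B C h).2

/-- The word generated by the SLP (from its axiom). -/
def str (P : CnfSLP α) : List α := P.strAt P.ax

/-- The size of an SLP: the number of nonterminals (in Chomsky normal form). -/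
def size (P : CnfSLP α) : ℕ := P.n

end CnfSLP

/-- `Generates u w c` means the infinite sequence `u · w^ω` is well defined
(`w` is nonempty) and equals the sequence `c`. -/
def Generates {α : Type} (u w : List α) (c : ℕ → α) : Prop :=
  w ≠ [] ∧ ∀ i : ℕ,
    (if i < u.length then u[i]? else w[(i - u.length) % w.length]?) = some (c i)

/-- `(P1, P2)` is an indicator pair for the unary language `L ⊆ {a}*`
(identified with the set of lengths of its words): the pair of SLPs over
`{0,1}` (here `Bool`, with `true` playing the role of `1`) generates the
characteristic sequence of `L`. -/
def IsIndicatorPair (P1 P2 : CnfSLP Bool) (L : Set ℕ) : Prop :=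
  ∃ c : ℕ → Bool, (∀ i, (c i = true ↔ i ∈ L)) ∧ Generates P1.str P2.str c

/-- The data of a unary pushdown automaton over the input alphabet `{a}`
(a transition whose `Bool` component is `true` reads `a`, otherwise it
reads `ε`): bottom-of-stack symbol, initial state, final states, transitions. -/
structure PrePDA (Q Γ : Type) where
  bot : Γ
  init : Q
  final : Set Q
  δ : Set (Q × Bool × Γ × Q × List Γ)

namespace PrePDA

variable {Q Γ : Type}

/-- Valid stack contents: a word in `(Γ∖{⊥})*⊥`. -/
def IsStack (A : PrePDA Q Γ) (s : List Γ) : Prop :=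
  ∃ s', A.bot ∉ s' ∧ s = s' ++ [A.bot]

/-- A move from configuration `c1` to `c2` reading `a` (if `σ = true`)
or `ε` (if `σ = false`). -/
def Move (A : PrePDA Q Γ) (c1 : Q × List Γ) (σ : Bool) (c2 : Q × List Γ) : Prop :=
  ∃ γ w, (c1.1, σ, γ, c2.1, w) ∈ A.δ ∧
    (((γ ≠ A.bot ∨ w ≠ []) ∧ ∃ s', c1.2 = γ :: s' ∧ c2.2 = w ++ s') ∨
      (γ = A.bot ∧ w = [] ∧ c1.2 = [A.bot] ∧ c2.2 = [A.bot]))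

/-- `Steps A c1 k c2`: there is a finite computation from `c1` to `c2`
reading the word `a^k`. -/
inductive Steps (A : PrePDA Q Γ) : Q × List Γ → ℕ → Q × List Γ → Prop
  | refl (c : Q × List Γ) : Steps A c 0 c
  | tail {c1 : Q × List Γ} {k : ℕ} {c2 : Q × List Γ} {σ : Bool} {c3 : Q × List Γ} :
      Steps A c1 k c2 → A.Move c2 σ c3 → Steps A c1 (k + (if σ then 1 else 0)) c3

/-- The language of the automaton, as a set of natural numbers:
`a^k` is accepted iff `k` is in this set (acceptance by final state,
starting from the configuration `(q₀, ⊥)`). -/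
def lang (A : PrePDA Q Γ) : Set ℕ :=
  {k | ∃ c : Q × List Γ, A.Steps (A.init, [A.bot]) k c ∧ c.1 ∈ A.final}

end PrePDA

/-- A unary deterministic pushdown automaton (udpda): finitely many states and
stack symbols, well-formed transitions (each pushed word has length at most 2,
and the bottom symbol is neither pushed above other symbols nor removed), and
at most one move available at every configuration. -/
structure UDPDA (Q Γ : Type) extends PrePDA Q Γ where
  finQ : Finite Q
  finΓ : Finite Γ
  wf : ∀ q1 σ γ q2 w, (q1, σ, γ, q2, w) ∈ δ →
    w.length ≤ 2 ∧
      ((γ ≠ bot ∧ bot ∉ w) ∨ (γ = bot ∧ (w = [] ∨ ∃ w', bot ∉ w' ∧ w = w' ++ [bot])))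
  det : ∀ c σ1 c1 σ2 c2, toPrePDA.IsStack c.2 →
    toPrePDA.Move c σ1 c1 → toPrePDA.Move c σ2 c2 → σ1 = σ2 ∧ c1 = c2

namespace UDPDA

variable {Q Γ : Type}

/-- The size of a udpda: `|Q| · |Γ|`. -/
noncomputable def size (A : UDPDA Q Γ) : ℕ := Nat.card Q * Nat.card Γ

/-- The language of a udpda. -/
def lang (A : UDPDA Q Γ) : Set ℕ := A.toPrePDA.lang

end UDPDA

/-!
The automaton runs a leftmost derivation of the two SLPs on its stack. It starts by pushing the
axiom of `P1` and then keeps replacing the nonterminal on top of the stack by the right-hand side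
of its rule; when the rule is a terminal `b`, it pops it, enters state `out b` (final iff `b` is
`1`) and then reads one letter. Whenever only `⊥` is left, it pushes the axiom of `P2`. Hence the
terminals are produced in the order of `str P1 · (str P2)^ω`, the `k`-th one right after `a^k`
has been read, and with 4 states and `P1.n + P2.n + 1` stack symbols the size is `4 (m + 1) ≤ 8 m`.
-/

namespace CnfSLP

variable {α : Type} (P : CnfSLP α)

theorem strAt_of_prod_eq_inl {i : Fin P.n} {a : α} (h : P.prod i = Sum.inl a) :
    P.strAt i = [a] := by
  rw [strAt.eq_def]; dsimp only; rw [h]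

theorem strAt_of_prod_eq_inr {i B C : Fin P.n} (h : P.prod i = Sum.inr (B, C)) :
    P.strAt i = P.strAt B ++ P.strAt C := by
  rw [strAt.eq_def]; dsimp only; rw [h]

end CnfSLP

namespace Generates

variable {α : Type} {a : α} {u w : List α} {c : ℕ → α}

theorem head (h : Generates (a :: u) w c) : c 0 = a := by
  simpa using (h.2 0).symm

theorem tail (h : Generates (a :: u) w c) : Generates u w (fun j => c (1 + j)) := by
  refine ⟨h.1, fun j => ?_⟩
  simpa [Nat.add_comm 1 j] using h.2 (j + 1)

theorem self_of_nil (h : Generates [] w c) : Generates w w c := by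
  refine ⟨h.1, fun j => ?_⟩
  have hj := h.2 j
  simp only [List.length_nil, Nat.not_lt_zero, if_false, Nat.sub_zero] at hj
  split_ifs with hjw
  · rwa [Nat.mod_eq_of_lt hjw] at hj
  · rwa [Nat.mod_eq_sub_mod (Nat.le_of_not_lt hjw)] at hj

end Generates

namespace PrePDA

variable {Q Γ : Type} {A : PrePDA Q Γ} {c₁ c₂ c₃ : Q × List Γ}

theorem Steps.trans {k k' : ℕ} (h₁ : A.Steps c₁ k c₂) (h₂ : A.Steps c₂ k' c₃) :
    A.Steps c₁ (k + k') c₃ := by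
  induction h₂ with
  | refl => exact h₁
  | tail _ hm ih => rw [← Nat.add_assoc]; exact ih.tail hm

theorem Steps.single {σ : Bool} (hm : A.Move c₁ σ c₂) : A.Steps c₁ (if σ then 1 else 0) c₂ := by
  simpa using (Steps.refl c₁).tail hm

end PrePDA

namespace IndicatorPDA

inductive State
  | start
  | expand
  | out (b : Bool)
  deriving DecidableEq, Fintype

theorem card_state : Nat.card State = 4 := by
  rw [Nat.card_eq_fintype_card]; rfl

variable (P1 P2 : CnfSLP Bool)

abbrev Sym := Fin P1.n ⊕ Fin P2.n

def rule : Sym P1 P2 → Bool ⊕ (Sym P1 P2 × Sym P1 P2) :=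
  Sum.elim (fun i => (P1.prod i).map id (Prod.map Sum.inl Sum.inl))
    (fun i => (P2.prod i).map id (Prod.map Sum.inr Sum.inr))

def yield : Sym P1 P2 → List Bool := Sum.elim P1.strAt P2.strAt

def rank : Sym P1 P2 → ℕ := Sum.elim Fin.val Fin.val

/-- `none` is the bottom symbol. -/
def stackOf (l : List (Sym P1 P2)) : List (Option (Sym P1 P2)) := l.map some ++ [none]

/-- The transition function; `(σ, q', w)` means: read `a` iff `σ`, go to `q'`, replace the top
symbol by `w`. -/
def transition : State → Option (Sym P1 P2) → Option (Bool × State × List (Option (Sym P1 P2)))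
  | .start, none => some (false, .expand, [some (Sum.inl P1.ax), none])
  | .start, some _ => none
  | .expand, none => some (false, .expand, [some (Sum.inr P2.ax), none])
  | .expand, some N => some <|
      match rule P1 P2 N with
      | .inl b => (false, .out b, [])
      | .inr (B, C) => (false, .expand, [some B, some C])
  | .out _, γ => some (true, .expand, [γ])

def pda : PrePDA State (Option (Sym P1 P2)) where
  bot := none
  init := .start
  final := {.out true}
  δ := {t | transition P1 P2 t.1 t.2.2.1 = some (t.2.1, t.2.2.2.1, t.2.2.2.2)}

variable {P1 P2}

section Grammar

variable {N B C : Sym P1 P2}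

theorem yield_of_rule_eq_inl {b : Bool} (h : rule P1 P2 N = Sum.inl b) : yield P1 P2 N = [b] := by
  rcases N with i | i <;>
    [rcases hp : P1.prod i with a | ⟨B', C'⟩; rcases hp : P2.prod i with a | ⟨B', C'⟩] <;>
    simp_all [rule, yield, CnfSLP.strAt_of_prod_eq_inl]

theorem yield_of_rule_eq_inr (h : rule P1 P2 N = Sum.inr (B, C)) :
    yield P1 P2 N = yield P1 P2 B ++ yield P1 P2 C := by
  rcases N with i | i <;>
    [rcases hp : P1.prod i with a | ⟨B', C'⟩; rcases hp : P2.prod i with a | ⟨B', C'⟩] <;>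
    simp [rule, hp] at h <;> obtain ⟨rfl, rfl⟩ := h <;>
    simp [yield, CnfSLP.strAt_of_prod_eq_inr _ hp]

theorem rank_lt_of_rule_eq_inr (h : rule P1 P2 N = Sum.inr (B, C)) :
    rank P1 P2 B < rank P1 P2 N := by
  rcases N with i | i <;>
    [rcases hp : P1.prod i with a | ⟨B', C'⟩; rcases hp : P2.prod i with a | ⟨B', C'⟩] <;>
    simp [rule, hp] at h <;> obtain ⟨rfl, rfl⟩ := h
  exacts [(P1.wf i B' C' hp).1, (P2.wf i B' C' hp).1]

end Grammar

section Automaton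

variable {q q' : State} {γ : Option (Sym P1 P2)} {σ : Bool} {w : List (Option (Sym P1 P2))}

/-- The bottom symbol is never popped: a stronger form of `UDPDA.wf`. -/
theorem transition_wf (h : transition P1 P2 q γ = some (σ, q', w)) :
    w.length ≤ 2 ∧ ((γ ≠ none ∧ none ∉ w) ∨ (γ = none ∧ ∃ w', none ∉ w' ∧ w = w' ++ [none])) := by
  rcases q with _ | _ | b <;> rcases γ with _ | N
  case expand.some =>
    rcases hN : rule P1 P2 N with b | ⟨B, C⟩ <;>
      simp only [transition, hN, Option.some.injEq, Prod.mk.injEq] at h <;>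
      obtain ⟨rfl, rfl, rfl⟩ := h <;> simp
  all_goals simp only [transition, Option.some.injEq, Prod.mk.injEq, reduceCtorEq] at h
  all_goals obtain ⟨rfl, rfl, rfl⟩ := h
  · exact ⟨by simp, .inr ⟨rfl, [some _], by simp, rfl⟩⟩
  · exact ⟨by simp, .inr ⟨rfl, [some _], by simp, rfl⟩⟩
  · exact ⟨by simp, .inr ⟨rfl, [], by simp, rfl⟩⟩
  · simp

theorem move_iff {s s' : List (Option (Sym P1 P2))} :
    (pda P1 P2).Move (q, s) σ (q', s') ↔
      ∃ γ w t, transition P1 P2 q γ = some (σ, q', w) ∧ s = γ :: t ∧ s' = w ++ t := by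
  constructor
  · rintro ⟨γ, w, hδ, ⟨-, t, rfl, rfl⟩ | ⟨hγ, rfl, -, -⟩⟩
    · exact ⟨γ, w, t, hδ, rfl, rfl⟩
    · obtain ⟨-, ⟨hγ', -⟩ | ⟨-, w', -, hw'⟩⟩ := transition_wf hδ
      · exact absurd hγ hγ'
      · simp at hw'
  · rintro ⟨γ, w, t, h, rfl, rfl⟩
    refine ⟨γ, w, h, .inl ⟨?_, t, rfl, rfl⟩⟩
    obtain ⟨-, ⟨hγ, -⟩ | ⟨-, w', -, rfl⟩⟩ := transition_wf h
    · exact .inl hγ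
    · exact .inr (by simp)

theorem steps_of_transition (h : transition P1 P2 q γ = some (σ, q', w))
    (t : List (Option (Sym P1 P2))) :
    (pda P1 P2).Steps (q, γ :: t) (if σ then 1 else 0) (q', w ++ t) :=
  .single (move_iff.2 ⟨γ, w, t, h, rfl, rfl⟩)

variable (P1 P2) in
def toUDPDA : UDPDA State (Option (Sym P1 P2)) where
  toPrePDA := pda P1 P2
  finQ := inferInstance
  finΓ := inferInstance
  wf _ _ _ _ _ h := (transition_wf h).imp_right (Or.imp_right (And.imp_right Or.inr))
  det := by
    rintro ⟨q, s⟩ σ₁ ⟨q₁, s₁⟩ σ₂ ⟨q₂, s₂⟩ - h₁ h₂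
    obtain ⟨γ, w, t, ht, rfl, rfl⟩ := move_iff.1 h₁
    obtain ⟨γ', w', t', ht', he, rfl⟩ := move_iff.1 h₂
    obtain ⟨rfl, rfl⟩ := List.cons.inj he
    simp_all

theorem size_toUDPDA : (toUDPDA P1 P2).size = 4 * (P1.n + P2.n + 1) := by
  rw [UDPDA.size, card_state]
  simp

end Automaton

section Run

variable {c : ℕ → Bool} {k : ℕ} {s t : List (Option (Sym P1 P2))}

theorem stackOf_eq_none_cons_iff {l : List (Sym P1 P2)} :
    stackOf P1 P2 l = none :: t ↔ l = [] ∧ t = [] := by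
  cases l <;> simp [stackOf, eq_comm]

theorem stackOf_eq_some_cons_iff {l : List (Sym P1 P2)} {N : Sym P1 P2} :
    stackOf P1 P2 l = some N :: t ↔ ∃ l', l = N :: l' ∧ t = stackOf P1 P2 l' := by
  cases l <;> simp [stackOf, eq_comm]

def StackGenerates (c : ℕ → Bool) (k : ℕ) (s : List (Option (Sym P1 P2))) : Prop :=
  ∃ l, s = stackOf P1 P2 l ∧ Generates (l.flatMap (yield P1 P2)) P2.str (fun j => c (k + j))

def ConfigInv (c : ℕ → Bool) (k : ℕ) : State → List (Option (Sym P1 P2)) → Prop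
  | .start, s => k = 0 ∧ s = [none]
  | .expand, s => StackGenerates c k s
  | .out b, s => c k = b ∧ StackGenerates c (k + 1) s

namespace StackGenerates

theorem initial (hgen : Generates P1.str P2.str c) :
    StackGenerates c 0 (stackOf P1 P2 [Sum.inl P1.ax]) :=
  ⟨_, rfl, by simpa [yield, CnfSLP.str] using hgen⟩

theorem push_axiom (h : StackGenerates c k (none :: t)) :
    StackGenerates c k ([some (Sum.inr P2.ax), none] ++ t) := by
  obtain ⟨l, hl, hgen⟩ := h
  obtain ⟨rfl, rfl⟩ := stackOf_eq_none_cons_iff.1 hl.symm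
  exact ⟨[Sum.inr P2.ax], rfl, by simpa [yield, CnfSLP.str] using hgen.self_of_nil⟩

theorem expand {N B C : Sym P1 P2} (hN : rule P1 P2 N = Sum.inr (B, C))
    (h : StackGenerates c k (some N :: t)) : StackGenerates c k ([some B, some C] ++ t) := by
  obtain ⟨l, hl, hgen⟩ := h
  obtain ⟨l', rfl, rfl⟩ := stackOf_eq_some_cons_iff.1 hl.symm
  exact ⟨B :: C :: l', rfl, by simpa [yield_of_rule_eq_inr hN] using hgen⟩

theorem pop {N : Sym P1 P2} {b : Bool} (hN : rule P1 P2 N = Sum.inl b)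
    (h : StackGenerates c k (some N :: t)) : c k = b ∧ StackGenerates c (k + 1) t := by
  obtain ⟨l, hl, hgen⟩ := h
  obtain ⟨l', rfl, rfl⟩ := stackOf_eq_some_cons_iff.1 hl.symm
  rw [List.flatMap_cons, yield_of_rule_eq_inl hN, List.singleton_append] at hgen
  exact ⟨hgen.head, l', rfl, by simpa only [Nat.add_assoc] using hgen.tail⟩

end StackGenerates

theorem ConfigInv.of_move (hgen : Generates P1.str P2.str c) {q q' : State} {σ : Bool}
    {s' : List (Option (Sym P1 P2))} (hinv : ConfigInv c k q s)
    (hm : (pda P1 P2).Move (q, s) σ (q', s')) : ConfigInv c (k + if σ then 1 else 0) q' s' := by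
  obtain ⟨γ, w, t, h, rfl, rfl⟩ := move_iff.1 hm
  rcases q with _ | _ | b <;> rcases γ with _ | N
  case expand.some =>
    rcases hN : rule P1 P2 N with b | ⟨B, C⟩ <;>
      simp only [transition, hN, Option.some.injEq, Prod.mk.injEq] at h <;>
      obtain ⟨rfl, rfl, rfl⟩ := h
    · exact hinv.pop hN
    · exact hinv.expand hN
  all_goals simp only [transition, Option.some.injEq, Prod.mk.injEq, reduceCtorEq] at h
  all_goals obtain ⟨rfl, rfl, rfl⟩ := h
  · obtain ⟨rfl, ht⟩ := hinv
    obtain rfl : t = [] := (List.cons.inj ht).2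
    exact .initial hgen
  · exact hinv.push_axiom
  · exact hinv.2
  · exact hinv.2

theorem ConfigInv.of_steps (hgen : Generates P1.str P2.str c)
    {cfg : State × List (Option (Sym P1 P2))} (h : (pda P1 P2).Steps (.start, [none]) k cfg) :
    ConfigInv c k cfg.1 cfg.2 := by
  induction h with
  | refl => exact ⟨rfl, rfl⟩
  | tail _ hm ih => exact ih.of_move hgen hm

theorem steps_expand_to_out (N : Sym P1 P2) (l : List (Sym P1 P2)) :
    ∃ b l', (pda P1 P2).Steps (.expand, stackOf P1 P2 (N :: l)) 0 (.out b, stackOf P1 P2 l') ∧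
      (N :: l).flatMap (yield P1 P2) = b :: l'.flatMap (yield P1 P2) := by
  rcases hN : rule P1 P2 N with b | ⟨B, C⟩
  · refine ⟨b, l, ?_, by simp [yield_of_rule_eq_inl hN]⟩
    exact steps_of_transition
      (show transition P1 P2 .expand (some N) = some (false, .out b, []) by simp [transition, hN]) _
  · obtain ⟨b, l', hsteps, hyield⟩ := steps_expand_to_out B (C :: l)
    refine ⟨b, l', ?_, ?_⟩
    · have hδ : transition P1 P2 .expand (some N) = some (false, .expand, [some B, some C]) := by
        simp [transition, hN]
      exact (steps_of_transition hδ _).trans hsteps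
    · rw [← hyield]
      simp [yield_of_rule_eq_inr hN]
termination_by rank P1 P2 N
decreasing_by exact rank_lt_of_rule_eq_inr hN

theorem StackGenerates.exists_steps_to_out (h : StackGenerates c k s) :
    ∃ s', (pda P1 P2).Steps (.expand, s) 0 (.out (c k), s') ∧ StackGenerates c (k + 1) s' := by
  obtain ⟨N, l, hsteps, hgen⟩ : ∃ N l, (pda P1 P2).Steps (.expand, s) 0
      (.expand, stackOf P1 P2 (N :: l)) ∧
      Generates ((N :: l).flatMap (yield P1 P2)) P2.str (fun j => c (k + j)) := by
    obtain ⟨_ | ⟨N, l⟩, rfl, hgen⟩ := h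
    · exact ⟨_, [], steps_of_transition (q := .expand) (γ := none) rfl [],
        by simpa [yield, CnfSLP.str] using hgen.self_of_nil⟩
    · exact ⟨N, l, .refl _, hgen⟩
  obtain ⟨b, l', hsteps', hyield⟩ := steps_expand_to_out N l
  rw [hyield] at hgen
  obtain rfl : c k = b := by simpa using hgen.head
  exact ⟨_, hsteps.trans hsteps', l', rfl, by simpa only [Nat.add_assoc] using hgen.tail⟩

theorem exists_steps_start_to_out (hgen : Generates P1.str P2.str c) (k : ℕ) :
    ∃ s, (pda P1 P2).Steps (.start, [none]) k (.out (c k), s) ∧ StackGenerates c (k + 1) s := by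
  induction k with
  | zero =>
    obtain ⟨s, hs, hgs⟩ := (StackGenerates.initial hgen).exists_steps_to_out
    exact ⟨s, (steps_of_transition (q := .start) (γ := none) rfl []).trans hs, hgs⟩
  | succ k ih =>
    obtain ⟨s, hs, hgs⟩ := ih
    obtain ⟨s', hs', hgs'⟩ := hgs.exists_steps_to_out
    obtain ⟨γ, t, rfl⟩ : ∃ γ t, s = γ :: t := by
      obtain ⟨_ | ⟨N, l⟩, rfl, -⟩ := hgs <;> exact ⟨_, _, rfl⟩
    exact ⟨s', (hs.trans (steps_of_transition (q := .out (c k)) rfl t)).trans hs', hgs'⟩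

end Run

theorem lang_toUDPDA {c : ℕ → Bool} (hgen : Generates P1.str P2.str c) :
    (toUDPDA P1 P2).lang = {k | c k = true} := by
  ext k
  constructor
  · rintro ⟨⟨q, s⟩, hs, rfl : q = .out true⟩
    exact (ConfigInv.of_steps hgen hs).1
  · intro hk
    obtain ⟨s, hs, -⟩ := exists_steps_start_to_out hgen k
    exact ⟨_, hs, congrArg State.out hk⟩

end IndicatorPDA

/-- There is an absolute constant `C` such that for every
unary language `L ⊆ {a}*` admitting an indicator pair of size `m`, there
exists a udpda `A` of size at most `C·m` with `L(A) = L`. -/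
theorem indicator_pair_to_udpda :
    ∃ C : ℕ, ∀ (L : Set ℕ) (m : ℕ) (P1 P2 : CnfSLP Bool),
      IsIndicatorPair P1 P2 L → P1.size + P2.size = m →
      ∃ (Q Γ : Type) (A : UDPDA Q Γ), A.size ≤ C * m ∧ A.lang = L := by
  refine ⟨8, fun L m P1 P2 ⟨c, hcL, hgen⟩ hm => ⟨_, _, IndicatorPDA.toUDPDA P1 P2, ?_, ?_⟩⟩
  · have := P1.ax.pos
    have := P2.ax.pos
    rw [IndicatorPDA.size_toUDPDA, ← hm, CnfSLP.size, CnfSLP.size]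
    omega
  · rw [IndicatorPDA.lang_toUDPDA hgen]
    ext k
    exact hcL k
end

section
/- Let Σ be an alphabet, u1, u2 ∈ Σ* with |u1| ≥ |u2|, and w1, w2 ∈ Σ* nonempty words. Let d = |u1| − |u2|, t = gcd(|w1|,|w2|), s = d mod |w2|, and let w be the prefix of w1 of length t. Then the infinite sequences u1·w1^ω and u2·w2^ω are equal if and only if all three of the following hold: (i) u1 equals the prefix of length |u1| of the sequence u2·w2^ω; (ii) w1 = w^{|w1|/t}; (iii) the cyclic shift w2[s..|w2|)·w2[0..s) equals w^{|w2|/t}. -/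
/-- The infinite sequence `u · w^ω` (as an `Option`-valued function on
positions; all values are `some` as soon as `w` is nonempty). -/
def seqOf {α : Type} (u w : List α) (i : ℕ) : Option α :=
  if i < u.length then u[i]? else w[(i - u.length) % w.length]?

/-!
Beyond position `|u₁|` both sequences are purely periodic, and comparing them there says
that `w₁^ω` equals `w₂'^ω`, where `w₂'` is `w₂` rotated by `d`. A sequence on `ℕ` with
periods `|w₁|` and `|w₂|` has period `t = gcd(|w₁|, |w₂|)` by Euclid's algorithm, so it is
the `ω`-power of its prefix `w` of length `t`; since `t` divides both lengths, `w₁` and `w₂'`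
are then powers of `w`.
-/

open Function

theorem Function.Periodic.nat_gcd {β : Type*} {f : ℕ → β} {m n : ℕ} (hm : Periodic f m)
    (hn : Periodic f n) : Periodic f (m.gcd n) := by
  induction m, n using Nat.gcd.induction with
  | H0 n => rwa [Nat.gcd_zero_left]
  | H1 m n _ ih =>
    rw [Nat.gcd_rec]
    refine ih (fun j => ?_) hm
    have hmul : Periodic f (n / m * m) := by simpa using hm.nat_mul (n / m)
    rw [← hmul, add_assoc, Nat.mod_add_div', hn]

namespace List

variable {α : Type*}

theorem getElem?_flatten_replicate (x : List α) (m j : ℕ) :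
    (replicate m x).flatten[j]? = if j < m * x.length then x[j % x.length]? else none := by
  induction m generalizing j with
  | zero => simp
  | succ m ih =>
    rw [replicate_succ, flatten_cons, getElem?_append, ih]
    rcases lt_or_ge j x.length with hj | hj
    · rw [if_pos hj, Nat.mod_eq_of_lt hj, if_pos (by nlinarith)]
    · obtain ⟨k, rfl⟩ := Nat.exists_eq_add_of_le hj
      simp [add_comm m 1, add_mul]

end List

variable {α : Type}

@[simp]
theorem seqOf_nil (w : List α) (i : ℕ) : seqOf [] w i = w[i % w.length]? := by
  simp [seqOf]

theorem seqOf_length_add (u w : List α) (j : ℕ) : seqOf u w (u.length + j) = seqOf [] w j := by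
  simp [seqOf]

theorem seqOf_nil_rotate (w : List α) (k : ℕ) :
    seqOf [] (w.rotate k) = fun j => seqOf [] w (k + j) := by
  funext j
  rcases eq_or_ne w [] with rfl | hw
  · simp
  · rw [seqOf_nil, seqOf_nil, List.length_rotate,
      List.getElem?_rotate (Nat.mod_lt j (List.length_pos_iff.2 hw)),
      Nat.mod_add_mod, add_comm]

theorem seqOf_nil_periodic (w : List α) : Periodic (seqOf [] w) w.length := by
  intro j
  simp

theorem seqOf_nil_flatten_replicate (x : List α) {m : ℕ} (hm : 0 < m) :
    seqOf [] (List.replicate m x).flatten = seqOf [] x := by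
  funext j
  rcases eq_or_ne x [] with rfl | hx
  · simp
  · have hmx : 0 < m * x.length := Nat.mul_pos hm (List.length_pos_iff.2 hx)
    have hlen : (List.replicate m x).flatten.length = m * x.length := by simp
    rw [seqOf_nil, seqOf_nil, hlen, List.getElem?_flatten_replicate, if_pos (Nat.mod_lt j hmx),
      Nat.mod_mod_of_dvd j (dvd_mul_left _ _)]

theorem eq_flatten_replicate_of_seqOf_nil_eq {w x : List α} (h : seqOf [] w = seqOf [] x)
    (hdvd : x.length ∣ w.length) : w = (List.replicate (w.length / x.length) x).flatten := by
  refine List.ext_getElem? fun j => ?_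
  rw [List.getElem?_flatten_replicate, Nat.div_mul_cancel hdvd]
  split_ifs with hj
  · simpa [Nat.mod_eq_of_lt hj] using congrFun h j
  · exact List.getElem?_eq_none (not_lt.1 hj)

theorem seqOf_nil_eq_seqOf_nil_iff {w₁ w₂ : List α}
    (hw₁ : w₁ ≠ []) (hw₂ : w₂ ≠ []) :
    seqOf [] w₁ = seqOf [] w₂ ↔
      w₁ = (List.replicate (w₁.length / w₁.length.gcd w₂.length)
          (w₁.take (w₁.length.gcd w₂.length))).flatten ∧
        w₂ = (List.replicate (w₂.length / w₁.length.gcd w₂.length)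
          (w₁.take (w₁.length.gcd w₂.length))).flatten := by
  set t := w₁.length.gcd w₂.length
  set x := w₁.take t
  have hpos₁ := List.length_pos_iff.2 hw₁
  have hpos₂ := List.length_pos_iff.2 hw₂
  have ht : 0 < t := Nat.gcd_pos_of_pos_left _ hpos₁
  have hxt : x.length = t := by simpa [x] using Nat.gcd_le_left _ hpos₁
  constructor
  · intro h
    have hper : Periodic (seqOf [] w₁) t :=
      (seqOf_nil_periodic w₁).nat_gcd (h ▸ seqOf_nil_periodic w₂)
    have hx : seqOf [] w₁ = seqOf [] x := by
      funext j
      rw [← hper.map_mod_nat, seqOf_nil, seqOf_nil, hxt,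
        Nat.mod_eq_of_lt ((Nat.mod_lt j ht).trans_le (Nat.gcd_le_left _ hpos₁)),
        List.getElem?_take_of_lt (Nat.mod_lt j ht)]
    rw [← hxt]
    exact ⟨eq_flatten_replicate_of_seqOf_nil_eq hx (hxt ▸ Nat.gcd_dvd_left _ _),
      eq_flatten_replicate_of_seqOf_nil_eq (h ▸ hx) (hxt ▸ Nat.gcd_dvd_right _ _)⟩
  · rintro ⟨h₁, h₂⟩
    have hm₁ : 0 < w₁.length / t := Nat.div_pos (Nat.gcd_le_left _ hpos₁) ht
    have hm₂ : 0 < w₂.length / t := Nat.div_pos (Nat.gcd_le_right _ hpos₂) ht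
    rw [h₁, h₂, seqOf_nil_flatten_replicate x hm₁, seqOf_nil_flatten_replicate x hm₂]

theorem seqOf_eq_seqOf_iff {u₁ u₂ w₁ w₂ : List α} (hlen : u₂.length ≤ u₁.length) :
    (∀ i, seqOf u₁ w₁ i = seqOf u₂ w₂ i) ↔
      (∀ i < u₁.length, u₁[i]? = seqOf u₂ w₂ i) ∧
        seqOf [] w₁ = seqOf [] (w₂.rotate (u₁.length - u₂.length)) := by
  obtain ⟨d, hd⟩ := Nat.exists_eq_add_of_le hlen
  have htail : ∀ j, seqOf u₂ w₂ (u₁.length + j) = seqOf [] (w₂.rotate d) j := by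
    intro j
    rw [seqOf_nil_rotate, hd, add_assoc, seqOf_length_add]
  rw [hd, Nat.add_sub_cancel_left, ← hd]
  constructor
  · intro h
    refine ⟨fun i hi => by simpa [seqOf, hi] using h i, funext fun j => ?_⟩
    rw [← seqOf_length_add u₁, h, htail]
  · rintro ⟨h₁, h₂⟩ i
    rcases lt_or_ge i u₁.length with hi | hi
    · simpa [seqOf, hi] using h₁ i hi
    · obtain ⟨j, rfl⟩ := Nat.exists_eq_add_of_le hi
      rw [seqOf_length_add, htail, h₂]

/-- Let `u1, u2` be words with `|u1| ≥ |u2|`, and `w1, w2`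
nonempty words.  Let `d = |u1| − |u2|`, `t = gcd(|w1|,|w2|)`, `s = d mod |w2|`,
and let `w` be the prefix of `w1` of length `t`.  Then `u1·w1^ω = u2·w2^ω`
iff (i) `u1` is the length-`|u1|` prefix of `u2·w2^ω`, (ii) `w1 = w^{|w1|/t}`,
and (iii) the cyclic shift `w2[s..|w2|)·w2[0..s)` equals `w^{|w2|/t}`. -/
theorem eventually_periodic_eq_iff {α : Type} (u1 u2 w1 w2 : List α)
    (hlen : u2.length ≤ u1.length) (hw1 : w1 ≠ []) (hw2 : w2 ≠ []) :
    (∀ i : ℕ, seqOf u1 w1 i = seqOf u2 w2 i) ↔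
      ((∀ i : ℕ, i < u1.length → u1[i]? = seqOf u2 w2 i) ∧
        w1 = (List.replicate (w1.length / Nat.gcd w1.length w2.length)
          (w1.take (Nat.gcd w1.length w2.length))).flatten ∧
        w2.drop ((u1.length - u2.length) % w2.length) ++
            w2.take ((u1.length - u2.length) % w2.length) =
          (List.replicate (w2.length / Nat.gcd w1.length w2.length)
            (w1.take (Nat.gcd w1.length w2.length))).flatten) := by
  rw [seqOf_eq_seqOf_iff hlen,
    seqOf_nil_eq_seqOf_nil_iff hw1 (by simpa using hw2),
    List.length_rotate, List.rotate_eq_drop_append_take_mod]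
end

section
/- Let n, m ≥ 1, u ∈ ℕ^n, v ∈ ℕ^m, t ∈ ℕ, and M ∈ ℕ with M > Σ_{i=1}^n u_i + Σ_{j=1}^m v_j and M > t. Define S ⊆ ℕ as the union of the three sets {2^m·M + k : k ∈ ℕ}, {k·M + r : k ∈ ℕ, r < M, r ≠ t}, and {(Σ_{j=1}^m y_j 2^{j−1})·M + y·v + x·u : y ∈ {0,1}^m, x ∈ {0,1}^n}. Then S = ℕ if and only if for every y ∈ {0,1}^m there exists x ∈ {0,1}^n with x·u + y·v = t. -/
/-- The inner product `x·w = Σ_i x_i w_i` of a `{0,1}`-vector `x` with `w`. -/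
def bdot {n : ℕ} (x : Fin n → Bool) (w : Fin n → ℕ) : ℕ :=
  ∑ i, if x i then w i else 0

/-- The number `Σ_j y_j 2^{j−1}` whose binary digits are given by
`y ∈ {0,1}^m` (`j`-th coordinate, `0`-indexed, has weight `2^j`). -/
def bvalue {m : ℕ} (y : Fin m → Bool) : ℕ :=
  ∑ j, if y j then 2 ^ (j : ℕ) else 0

lemma bdot_le {n : ℕ} (x : Fin n → Bool) (w : Fin n → ℕ) : bdot x w ≤ ∑ i, w i :=
  Finset.sum_le_sum fun i _ => by split <;> simp

lemma bvalue_succ {m : ℕ} (y : Fin (m + 1) → Bool) :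
    bvalue y = (if y 0 then 1 else 0) + 2 * bvalue (fun j => y j.succ) := by
  unfold bvalue
  rw [Fin.sum_univ_succ, Finset.mul_sum]
  have h1 : (if y 0 then 2 ^ ((0 : Fin (m + 1)) : ℕ) else 0) = (if y 0 then 1 else 0) := by
    simp
  have h2 : ∀ j : Fin m, (if y j.succ then 2 ^ ((j.succ : Fin (m + 1)) : ℕ) else 0) =
      2 * (if y j.succ then 2 ^ (j : ℕ) else 0) := by
    intro j
    split <;> simp [pow_succ, mul_comm]
  rw [h1, Finset.sum_congr rfl fun j _ => h2 j, ← Finset.mul_sum]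

lemma bvalue_lt {m : ℕ} (y : Fin m → Bool) : bvalue y < 2 ^ m := by
  induction m with
  | zero => simp [bvalue]
  | succ m ih =>
    rw [bvalue_succ]
    have h := ih (fun j => y j.succ)
    rw [pow_succ]
    split <;> omega

lemma bvalue_surj {m : ℕ} (k : ℕ) (hk : k < 2 ^ m) : ∃ y : Fin m → Bool, bvalue y = k := by
  induction m generalizing k with
  | zero =>
    refine ⟨fun j => false, ?_⟩
    simp [bvalue]; omega
  | succ m ih =>
    have hk2 : k / 2 < 2 ^ m := by
      rw [pow_succ] at hk; omega
    obtain ⟨y', hy'⟩ := ih (k / 2) hk2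
    refine ⟨Fin.cons (decide (k % 2 = 1)) y', ?_⟩
    rw [bvalue_succ]
    simp only [Fin.cons_zero, Fin.cons_succ]
    rw [hy']
    rcases Nat.mod_two_eq_zero_or_one k with h | h <;> simp [h] <;> omega

lemma bvalue_inj {m : ℕ} : Function.Injective (bvalue (m := m)) := by
  induction m with
  | zero => intro y y' _; funext j; exact j.elim0
  | succ m ih =>
    intro y y' h
    rw [bvalue_succ y, bvalue_succ y'] at h
    have h2 : bvalue (fun j => y j.succ) = bvalue (fun j => y' j.succ) ∧ y 0 = y' 0 := by
      cases hy : y 0 <;> cases hy' : y' 0 <;> simp [hy, hy'] at h ⊢ <;> omega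
    have htail := ih h2.1
    funext j
    refine Fin.cases ?_ ?_ j
    · exact h2.2
    · intro i; exact congrFun htail i

lemma div_mod_unique' {a b r s M : ℕ} (hr : r < M) (hs : s < M)
    (h : a * M + r = b * M + s) : a = b ∧ r = s := by
  have hM : 0 < M := by omega
  have ha : (a * M + r) / M = a := by
    rw [mul_comm, Nat.mul_add_div hM, Nat.div_eq_of_lt hr, add_zero]
  have hb : (b * M + s) / M = b := by
    rw [mul_comm, Nat.mul_add_div hM, Nat.div_eq_of_lt hs, add_zero]
  have hab : a = b := by rw [← ha, h, hb]
  subst hab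
  exact ⟨rfl, by omega⟩

/-- Let `n, m ≥ 1`, `u ∈ ℕ^n`, `v ∈ ℕ^m`, `t ∈ ℕ` and
`M > Σu + Σv`, `M > t`.  The set
`S = {2^m·M + k} ∪ {k·M + r : r < M, r ≠ t} ∪ {(Σ_j y_j 2^{j−1})·M + y·v + x·u}`
equals `ℕ` iff for every `y ∈ {0,1}^m` there is `x ∈ {0,1}^n` with
`x·u + y·v = t`. -/
theorem integer_expression_universality (n m : ℕ) (hn : 1 ≤ n) (hm : 1 ≤ m)
    (u : Fin n → ℕ) (v : Fin m → ℕ) (t M : ℕ)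
    (hM : (∑ i, u i) + (∑ j, v j) < M) (hMt : t < M) :
    ({ N : ℕ | ∃ k : ℕ, N = 2 ^ m * M + k } ∪
      { N : ℕ | ∃ k r : ℕ, r < M ∧ r ≠ t ∧ N = k * M + r } ∪
      { N : ℕ | ∃ (y : Fin m → Bool) (x : Fin n → Bool),
          N = bvalue y * M + bdot y v + bdot x u }) = Set.univ ↔
      ∀ y : Fin m → Bool, ∃ x : Fin n → Bool, bdot x u + bdot y v = t := by
  have hM0 : 0 < M := by omega
  constructor
  · intro hS y
    have hN : bvalue y * M + t ∈ (Set.univ : Set ℕ) := Set.mem_univ _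
    rw [← hS] at hN
    simp only [Set.mem_union, Set.mem_setOf_eq] at hN
    rcases hN with (⟨k, hk⟩ | ⟨k, r, hr, hrt, hkr⟩) | ⟨y', x, hyx⟩
    · exfalso
      have h1 : (bvalue y + 1) * M ≤ 2 ^ m * M :=
        Nat.mul_le_mul_right _ (bvalue_lt y)
      rw [add_mul, one_mul] at h1
      omega
    · exact absurd (div_mod_unique' hMt hr hkr).2 (Ne.symm hrt)
    · have h1 : bdot y' v + bdot x u < M := by
        have := bdot_le y' v; have := bdot_le x u; omega
      rw [add_assoc] at hyx
      obtain ⟨heq, hrem⟩ := div_mod_unique' hMt h1 hyx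
      have hy' : y' = y := bvalue_inj heq.symm
      subst hy'
      exact ⟨x, by omega⟩
  · intro h
    ext N
    simp only [Set.mem_union, Set.mem_setOf_eq, Set.mem_univ, iff_true]
    by_cases hbig : 2 ^ m * M ≤ N
    · exact Or.inl (Or.inl ⟨N - 2 ^ m * M, by omega⟩)
    · push_neg at hbig
      have hdm : N / M * M + N % M = N := by
        have := Nat.div_add_mod N M
        rw [mul_comm]; omega
      have hrlt : N % M < M := Nat.mod_lt _ hM0
      by_cases hrt : N % M = t
      · have hklt : N / M < 2 ^ m := by
          rcases Nat.lt_or_ge (N / M) (2 ^ m) with h' | h'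
          · exact h'
          · exfalso
            have : 2 ^ m * M ≤ N / M * M := Nat.mul_le_mul_right _ h'
            omega
        obtain ⟨y, hy⟩ := bvalue_surj (N / M) hklt
        obtain ⟨x, hx⟩ := h y
        refine Or.inr ⟨y, x, ?_⟩
        rw [hy, add_assoc]
        omega
      · exact Or.inl (Or.inr ⟨N / M, N % M, hrlt, hrt, by omega⟩)
end

section
/- There is an absolute constant C such that for every udpda A of size m, the language L(A) is accepted by a deterministic finite automaton with at most 2^{C·m} states. -/
/-!
A udpda is simulated by a deterministic machine that rewrites the top stack symbol. Whether, and
after how many steps, a pair (state `q`, top symbol `γ`) is popped does not depend on the stack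
below `γ`. A pop of `(q, γ)` is one move followed by the pops of the at most two pushed symbols,
which are pops of other pairs since pop lengths are unique; hence every pop takes fewer than
`2 ^ m` steps, `m = |Q| · |Γ|`. Call a time a floor if its top symbol is never popped afterwards:
every floor is followed by another one within `2 ^ m` steps, so among the first
`(m + 1) · 2 ^ m` steps two floors carry the same pair `(q, γ)`. From the first of them on, the
run repeats itself with a fixed shift in time and in the number of letters read, so `L(A)` is
eventually periodic with threshold plus period at most `(m + 1) · 2 ^ m + 1 ≤ 2 ^ (3m)`, and a
DFA shaped like a lasso accepts it.
-/

section EventuallyPeriodic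

variable {L : Set ℕ} {N p : ℕ}

lemma mem_iff_add_mul_mem (hL : ∀ n, N ≤ n → (n ∈ L ↔ n + p ∈ L)) (k : ℕ) {n : ℕ} (hn : N ≤ n) :
    n ∈ L ↔ n + p * k ∈ L := by
  induction k with
  | zero => simp
  | succ k ih => rw [ih, hL _ (by omega), mul_add_one, add_assoc]

theorem exists_dfa_of_eventually_periodic (hp : 0 < p)
    (hL : ∀ n, N ≤ n → (n ∈ L ↔ n + p ∈ L)) :
    ∃ M : DFA Unit (Fin (N + p)), ∀ n, List.replicate n () ∈ M.accepts ↔ n ∈ L := by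
  let M : DFA Unit (Fin (N + p)) :=
    { step := fun s _ => if h : (s : ℕ) + 1 < N + p then ⟨s + 1, h⟩ else ⟨N, by omega⟩
      start := ⟨0, by omega⟩
      accept := {s | (s : ℕ) ∈ L} }
  have hstate : ∀ n, ∃ s : ℕ, (M.eval (List.replicate n ()) : ℕ) = s ∧
      ((s < N ∧ s = n) ∨ (N ≤ s ∧ ∃ k, n = s + p * k)) := by
    intro n
    induction n with
    | zero =>
      refine ⟨0, rfl, ?_⟩
      rcases Nat.eq_zero_or_pos N with hN | hN
      · exact Or.inr ⟨hN.le, 0, rfl⟩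
      · exact Or.inl ⟨hN, rfl⟩
    | succ n ih =>
      obtain ⟨s, hs, hinv⟩ := ih
      simp only [DFA.eval, List.replicate_succ', DFA.evalFrom_append_singleton] at hs ⊢
      simp only [M, apply_dite Fin.val, hs]
      split_ifs with h
      · refine ⟨_, rfl, ?_⟩
        rcases hinv with ⟨h1, rfl⟩ | ⟨h1, k, hk⟩
        · by_cases hsN : s + 1 < N
          · exact Or.inl ⟨hsN, rfl⟩
          · exact Or.inr ⟨by omega, 0, by omega⟩
        · exact Or.inr ⟨by omega, k, by omega⟩
      · refine ⟨_, rfl, Or.inr ⟨le_rfl, ?_⟩⟩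
        rcases hinv with ⟨h1, h2⟩ | ⟨h1, k, hk⟩
        · exact ⟨0, by omega⟩
        · exact ⟨k + 1, by rw [hk, mul_add_one]; omega⟩
  refine ⟨M, fun n => ?_⟩
  obtain ⟨s, hs, hinv⟩ := hstate n
  change (M.eval (List.replicate n ()) : ℕ) ∈ L ↔ n ∈ L
  rw [hs]
  rcases hinv with ⟨-, rfl⟩ | ⟨hN, k, rfl⟩
  · rfl
  · exact mem_iff_add_mul_mem hL k hN

lemma exists_eventually_periodic_of_shift (Acc : ℕ → ℕ → Prop) {t₁ t₂ k₁ k₂ : ℕ}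
    (ht : t₁ < t₂) (hk : k₁ ≤ k₂) (hbefore₁ : ∀ t n, Acc t n → t < t₁ → n ≤ k₁)
    (hbefore₂ : ∀ t n, Acc t n → t < t₂ → n ≤ k₂)
    (hshift : ∀ d n, Acc (t₁ + d) n ↔ Acc (t₂ + d) (n + (k₂ - k₁))) :
    ∃ N p, 0 < p ∧ N + p ≤ k₂ + 2 ∧
      ∀ n, N ≤ n → ((∃ t, Acc t n) ↔ ∃ t, Acc t (n + p)) := by
  rcases hk.lt_or_eq with hk | rfl
  · refine ⟨k₁ + 1, k₂ - k₁, by omega, by omega, fun n hn => ⟨?_, ?_⟩⟩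
    · rintro ⟨t, h⟩
      have : t₁ ≤ t := not_lt.mp fun h' => absurd (hbefore₁ t n h h') (by omega)
      obtain ⟨d, rfl⟩ := Nat.exists_eq_add_of_le this
      exact ⟨_, (hshift d n).mp h⟩
    · rintro ⟨t, h⟩
      have : t₂ ≤ t := not_lt.mp fun h' => absurd (hbefore₂ t _ h h') (by omega)
      obtain ⟨d, rfl⟩ := Nat.exists_eq_add_of_le this
      exact ⟨_, (hshift d n).mpr h⟩
  · have hbounded : ∀ t n, Acc t n → n ≤ k₁ := by
      intro t
      induction t using Nat.strong_induction_on with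
      | _ t ih =>
        intro n h
        by_cases h' : t < t₂
        · exact hbefore₂ t n h h'
        obtain ⟨d, rfl⟩ := Nat.exists_eq_add_of_le (not_lt.mp h')
        exact ih (t₁ + d) (by omega) n ((hshift d n).mpr (by simpa using h))
    refine ⟨k₁ + 1, 1, by omega, by omega, fun n hn => iff_of_false ?_ ?_⟩ <;>
      exact fun ⟨t, h⟩ => absurd (hbounded t _ h) (by omega)

end EventuallyPeriodic

/-- In state `q` with `γ` on top of the stack, `next q γ = some (b, q', w)` reads a letter iff `b`,
enters `q'` and replaces `γ` by `w`. -/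
structure StackMachine (Q Γ : Type) where
  next : Q → Γ → Option (Bool × Q × List Γ)
  length_le_two : ∀ {q γ b q' w}, next q γ = some (b, q', w) → w.length ≤ 2

namespace StackMachine

variable {Q Γ : Type} (M : StackMachine Q Γ)

def step : Q × List Γ → Option (ℕ × Q × List Γ)
  | (_, []) => none
  | (q, γ :: s) => (M.next q γ).map fun (b, q', w) => (if b then 1 else 0, q', w ++ s)

/-- The number of letters read in `t` steps from `c` and the configuration reached; `none` if
the machine halts earlier. -/
def run : ℕ → Q × List Γ → Option (ℕ × Q × List Γ)
  | 0, c => some (0, c)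
  | t + 1, c => (M.step c).bind fun (b, c') => (run t c').map fun (k, c'') => (b + k, c'')

variable {M}

@[simp] lemma step_nil (q : Q) : M.step (q, []) = none := rfl

@[simp] lemma run_zero (c : Q × List Γ) : M.run 0 c = some (0, c) := rfl

lemma run_succ_cons (t : ℕ) (q : Q) (γ : Γ) (s : List Γ) :
    M.run (t + 1) (q, γ :: s) = (M.next q γ).bind fun (b, q', w) =>
      (M.run t (q', w ++ s)).map fun (k, c) => ((if b then 1 else 0) + k, c) := by
  simp only [run, step]
  cases M.next q γ <;> rfl

lemma run_add (t t' : ℕ) (c : Q × List Γ) :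
    M.run (t + t') c = (M.run t c).bind fun (k, c') =>
      (M.run t' c').map fun (k', c'') => (k + k', c'') := by
  induction t generalizing c with
  | zero => simp
  | succ t ih =>
    rw [Nat.add_right_comm, run, run]
    cases M.step c with
    | none => rfl
    | some x =>
      simp only [Option.bind_some, ih]
      cases M.run t x.2 with
      | none => rfl
      | some y => simp [Option.map_map, Function.comp_def, add_assoc]

lemma run_add_of_eq_some {t : ℕ} {c c' : Q × List Γ} {k : ℕ} (h : M.run t c = some (k, c'))
    (t' : ℕ) : M.run (t + t') c = (M.run t' c').map fun (k', c'') => (k + k', c'') := by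
  rw [run_add, h, Option.bind_some]

lemma run_eq_none_of_le {t t' : ℕ} {c : Q × List Γ} (h : M.run t c = none) (ht : t ≤ t') :
    M.run t' c = none := by
  obtain ⟨d, rfl⟩ := Nat.exists_eq_add_of_le ht
  rw [run_add, h, Option.bind_none]

lemma run_succ_cons_eq_some {t k : ℕ} {q : Q} {γ : Γ} {s : List Γ} {c : Q × List Γ} :
    M.run (t + 1) (q, γ :: s) = some (k, c) ↔ ∃ b q₁ w k₁, M.next q γ = some (b, q₁, w) ∧
      M.run t (q₁, w ++ s) = some (k₁, c) ∧ k = (if b then 1 else 0) + k₁ := by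
  rw [run_succ_cons, Option.bind_eq_some_iff]
  constructor
  · rintro ⟨⟨b, q₁, w⟩, hnext, h⟩
    obtain ⟨⟨k₁, c₁⟩, hrun, h⟩ := Option.map_eq_some_iff.mp h
    obtain ⟨rfl, rfl⟩ := Prod.mk.inj h
    exact ⟨b, q₁, w, k₁, hnext, hrun, rfl⟩
  · rintro ⟨b, q₁, w, k₁, hnext, hrun, rfl⟩
    exact ⟨(b, q₁, w), hnext, by simp [hrun]⟩

lemma count_le_of_run_eq_some {t k : ℕ} {c c' : Q × List Γ} (h : M.run t c = some (k, c')) :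
    k ≤ t := by
  induction t generalizing k c with
  | zero =>
    simp only [run_zero, Option.some_inj, Prod.mk.injEq] at h
    omega
  | succ t ih =>
    obtain ⟨q, _ | ⟨γ, s⟩⟩ := c
    · simp [run] at h
    obtain ⟨b, q₁, w, k₁, -, hrun, rfl⟩ := run_succ_cons_eq_some.mp h
    have := ih hrun
    split <;> omega

lemma count_le_count_of_le {t t' k k' : ℕ} {c c₁ c₂ : Q × List Γ}
    (h : M.run t c = some (k, c₁)) (h' : M.run t' c = some (k', c₂)) (ht : t ≤ t') : k ≤ k' := by
  obtain ⟨d, rfl⟩ := Nat.exists_eq_add_of_le ht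
  rw [run_add_of_eq_some h] at h'
  obtain ⟨⟨k'', c''⟩, -, h'⟩ := Option.map_eq_some_iff.mp h'
  rw [← (Prod.mk.inj h').1]
  omega

lemma run_append {t k : ℕ} {q q' : Q} {u u' : List Γ} (h : M.run t (q, u) = some (k, q', u'))
    (r : List Γ) : M.run t (q, u ++ r) = some (k, q', u' ++ r) := by
  induction t generalizing k q u with
  | zero =>
    simp only [run_zero, Option.some_inj, Prod.mk.injEq] at h
    obtain ⟨rfl, rfl, rfl⟩ := h
    rfl
  | succ t ih =>
    obtain _ | ⟨γ, u⟩ := u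
    · simp [run] at h
    obtain ⟨b, q₁, w, k₁, hnext, hrun, rfl⟩ := run_succ_cons_eq_some.mp h
    rw [List.cons_append, run_succ_cons_eq_some]
    exact ⟨b, q₁, w, k₁, hnext, by simpa using ih hrun, rfl⟩

variable (M) in
def Empties (c : Q × List Γ) (L : ℕ) (q' : Q) : Prop := ∃ k, M.run L c = some (k, q', [])

variable (M) in
def NeverEmpties (c : Q × List Γ) : Prop := ∀ L q', ¬ M.Empties c L q'

lemma empties_nil (q : Q) : M.Empties (q, []) 0 q := ⟨0, rfl⟩

lemma empties_cons_succ_iff {q q' : Q} {γ : Γ} {s : List Γ} {L : ℕ} :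
    M.Empties (q, γ :: s) (L + 1) q' ↔
      ∃ b q₁ w, M.next q γ = some (b, q₁, w) ∧ M.Empties (q₁, w ++ s) L q' := by
  simp only [Empties, run_succ_cons_eq_some]
  constructor
  · rintro ⟨-, b, q₁, w, k₁, hnext, hrun, -⟩
    exact ⟨b, q₁, w, hnext, k₁, hrun⟩
  · rintro ⟨b, q₁, w, hnext, k₁, hrun⟩
    exact ⟨_, b, q₁, w, k₁, hnext, hrun, rfl⟩

lemma not_empties_cons_zero {q q' : Q} {γ : Γ} {s : List Γ} : ¬ M.Empties (q, γ :: s) 0 q' := by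
  simp [Empties]

lemma Empties.run_eq_none {c : Q × List Γ} {L t : ℕ} {q : Q} (h : M.Empties c L q) (ht : L < t) :
    M.run t c = none := by
  obtain ⟨k, hk⟩ := h
  obtain ⟨d, rfl⟩ := Nat.exists_eq_add_of_lt ht
  rw [add_assoc, run_add_of_eq_some hk]
  simp [run]

lemma Empties.eq {c : Q × List Γ} {L L' : ℕ} {q q' : Q} (h : M.Empties c L q)
    (h' : M.Empties c L' q') : L = L' := by
  by_contra hne
  obtain ⟨k, hk⟩ := h
  obtain ⟨k', hk'⟩ := h'
  rcases Nat.lt_or_gt_of_ne hne with hlt | hlt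
  · simp [Empties.run_eq_none ⟨k, hk⟩ hlt] at hk'
  · simp [Empties.run_eq_none ⟨k', hk'⟩ hlt] at hk

lemma Empties.append {q q₁ q₂ : Q} {u v : List Γ} {L₁ L₂ : ℕ} (h₁ : M.Empties (q, u) L₁ q₁)
    (h₂ : M.Empties (q₁, v) L₂ q₂) : M.Empties (q, u ++ v) (L₁ + L₂) q₂ := by
  obtain ⟨k₁, hk₁⟩ := h₁
  obtain ⟨k₂, hk₂⟩ := h₂
  exact ⟨k₁ + k₂, by simpa [hk₂] using run_add_of_eq_some (run_append hk₁ v) L₂⟩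

lemma Empties.split {q q₂ : Q} {u v : List Γ} {L : ℕ} (h : M.Empties (q, u ++ v) L q₂) :
    ∃ L₁ q₁, L₁ ≤ L ∧ M.Empties (q, u) L₁ q₁ ∧ M.Empties (q₁, v) (L - L₁) q₂ := by
  induction L generalizing q u with
  | zero =>
    obtain _ | ⟨γ, u⟩ := u
    · exact ⟨0, q, le_rfl, empties_nil q, h⟩
    · exact absurd h not_empties_cons_zero
  | succ L ih =>
    obtain _ | ⟨γ, u⟩ := u
    · exact ⟨0, q, by omega, empties_nil q, h⟩
    rw [List.cons_append] at h
    obtain ⟨b, q', w, hnext, h⟩ := empties_cons_succ_iff.mp h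
    rw [← List.append_assoc] at h
    obtain ⟨L₁, q₁, hL₁, h₁, h₂⟩ := ih h
    exact ⟨L₁ + 1, q₁, by omega, empties_cons_succ_iff.mpr ⟨b, q', w, hnext, h₁⟩,
      by simpa using h₂⟩

lemma NeverEmpties.of_next {q : Q} {γ : Γ} {s : List Γ} {b : Bool} {q₁ : Q} {w : List Γ}
    (h : M.NeverEmpties (q, γ :: s)) (hnext : M.next q γ = some (b, q₁, w)) :
    M.NeverEmpties (q₁, w ++ s) :=
  fun L q' hL => h (L + 1) q' (empties_cons_succ_iff.mpr ⟨b, q₁, w, hnext, hL⟩)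

lemma run_append_eq_map {q : Q} {u : List Γ} (h : M.NeverEmpties (q, u)) (r : List Γ) (t : ℕ) :
    M.run t (q, u ++ r) = (M.run t (q, u)).map fun (k, q', u') => (k, q', u' ++ r) := by
  induction t generalizing q u with
  | zero => rfl
  | succ t ih =>
    obtain _ | ⟨γ, u⟩ := u
    · exact absurd (empties_nil q) (h 0 q)
    rw [List.cons_append, run_succ_cons, run_succ_cons]
    cases hnext : M.next q γ with
    | none => rfl
    | some x =>
      obtain ⟨b, q₁, w⟩ := x
      simp only [Option.bind_some]
      rw [← List.append_assoc, ih (h.of_next hnext)]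
      simp [Option.map_map, Function.comp_def]

section PopBound

variable (M) in
def PopsIn (q : Q) (γ : Γ) (L : ℕ) : Prop := ∃ q', M.Empties (q, [γ]) L q'

lemma PopsIn.eq {q : Q} {γ : Γ} {L L' : ℕ} (h : M.PopsIn q γ L) (h' : M.PopsIn q γ L') :
    L = L' :=
  h.choose_spec.eq h'.choose_spec

lemma PopsIn.decompose {q : Q} {γ : Γ} {L : ℕ} (h : M.PopsIn q γ L) :
    ∃ L₁ L₂, L = L₁ + L₂ + 1 ∧ (L₁ = 0 ∨ ∃ p : Q × Γ, M.PopsIn p.1 p.2 L₁) ∧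
      (L₂ = 0 ∨ ∃ p : Q × Γ, M.PopsIn p.1 p.2 L₂) := by
  obtain ⟨q', h⟩ := h
  obtain _ | L := L
  · exact absurd h not_empties_cons_zero
  obtain ⟨b, q₁, w, hnext, h⟩ := empties_cons_succ_iff.mp h
  rw [List.append_nil] at h
  match w, M.length_le_two hnext with
  | [], _ => exact ⟨0, 0, by rw [h.eq (empties_nil q₁)], Or.inl rfl, Or.inl rfl⟩
  | [x], _ => exact ⟨L, 0, rfl, Or.inr ⟨(q₁, x), q', h⟩, Or.inl rfl⟩
  | [x, y], _ =>
    obtain ⟨L₁, q₂, hL₁, h₁, h₂⟩ := Empties.split (u := [x]) (v := [y]) h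
    exact ⟨L₁, L - L₁, by omega, Or.inr ⟨(q₁, x), q₂, h₁⟩, Or.inr ⟨(q₂, y), q', h₂⟩⟩

variable (M) in
def popSet (L : ℕ) : Set (Q × Γ) := {p | ∃ L' ≤ L, M.PopsIn p.1 p.2 L'}

variable [Finite Q] [Finite Γ]

/-- Pop lengths are unique, so the subpops of a pop of `(q, γ)` are pops of other pairs. -/
lemma PopsIn.lt_two_pow_of_ncard_le (n : ℕ) :
    ∀ {q γ L}, M.PopsIn q γ L → (M.popSet L).ncard ≤ n → L < 2 ^ n := by
  induction n with
  | zero =>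
    intro q γ L h hcard
    have : (M.popSet L).Nonempty := ⟨(q, γ), L, le_rfl, h⟩
    have := (Set.ncard_pos (Set.toFinite _)).mpr this
    omega
  | succ n ih =>
    intro q γ L h hcard
    have hshorter : ∀ L' < L, ∀ p : Q × Γ, M.PopsIn p.1 p.2 L' → L' < 2 ^ n := by
      intro L' hL' p hp
      refine ih hp ?_
      have hsub : M.popSet L' ⊆ M.popSet L \ {(q, γ)} := by
        rintro x ⟨L'', hL'', hx⟩
        refine ⟨⟨L'', by omega, hx⟩, ?_⟩
        rintro rfl
        have := hx.eq h
        omega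
      calc (M.popSet L').ncard ≤ (M.popSet L \ {(q, γ)}).ncard := Set.ncard_le_ncard hsub
        _ = (M.popSet L).ncard - 1 := Set.ncard_sdiff_singleton_of_mem ⟨L, le_rfl, h⟩
        _ ≤ n := by omega
    obtain ⟨L₁, L₂, rfl, h₁, h₂⟩ := h.decompose
    have hL₁ : L₁ < 2 ^ n := by
      rcases h₁ with h₁ | ⟨p, hp⟩
      · exact h₁ ▸ Nat.two_pow_pos n
      · exact hshorter L₁ (by omega) p hp
    have hL₂ : L₂ < 2 ^ n := by
      rcases h₂ with h₂ | ⟨p, hp⟩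
      · exact h₂ ▸ Nat.two_pow_pos n
      · exact hshorter L₂ (by omega) p hp
    rw [pow_succ]
    omega

theorem PopsIn.lt_two_pow {q : Q} {γ : Γ} {L : ℕ} (h : M.PopsIn q γ L) :
    L < 2 ^ Nat.card (Q × Γ) :=
  h.lt_two_pow_of_ncard_le _ <| by
    simpa [Set.ncard_univ] using Set.ncard_le_ncard (Set.subset_univ (M.popSet L))

end PopBound

variable (M) in
def acceptedCounts (F : Set Q) (c : Q × List Γ) : Set ℕ :=
  {n | ∃ t q s, M.run t c = some (n, q, s) ∧ q ∈ F}

variable (M) in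
/-- Time `t` is a floor of the run from `c`: from then on the stack never drops below its
current height. -/
def IsFloor (c : Q × List Γ) (t : ℕ) (q : Q) (γ : Γ) : Prop :=
  (∃ k r, M.run t c = some (k, q, γ :: r)) ∧ M.NeverEmpties (q, [γ])

lemma IsFloor.exists_next {c : Q × List Γ} {t : ℕ} {q : Q} {γ : Γ} [Finite Q] [Finite Γ]
    (h : M.IsFloor c t q γ) (hdef : M.run (t + 1) c ≠ none) :
    ∃ t', t < t' ∧ t' ≤ t + 2 ^ Nat.card (Q × Γ) ∧ ∃ q' γ', M.IsFloor c t' q' γ' := by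
  obtain ⟨⟨k, r, hrun⟩, hnever⟩ := h
  rw [run_add_of_eq_some hrun, run_succ_cons] at hdef
  obtain ⟨⟨b, q₁, w⟩, hnext⟩ : ∃ x, M.next q γ = some x :=
    Option.ne_none_iff_exists'.mp fun h => hdef (by simp [h])
  have hrun₁ : M.run (t + 1) c = some (k + (if b then 1 else 0), q₁, w ++ r) := by
    simp [run_add_of_eq_some hrun, run_succ_cons, hnext]
  have hnever₁ : M.NeverEmpties (q₁, w) := by simpa using hnever.of_next hnext
  have hB := Nat.one_le_two_pow (n := Nat.card (Q × Γ))
  obtain _ | ⟨x, w⟩ := w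
  · exact absurd (empties_nil q₁) (hnever₁ 0 q₁)
  by_cases hx : M.NeverEmpties (q₁, [x])
  · exact ⟨t + 1, by omega, by omega, q₁, x, ⟨_, _, hrun₁⟩, hx⟩
  obtain ⟨L, q₂, hL⟩ : ∃ L q₂, M.Empties (q₁, [x]) L q₂ := by
    simpa [NeverEmpties] using hx
  have hLB : L < 2 ^ Nat.card (Q × Γ) := PopsIn.lt_two_pow ⟨q₂, hL⟩
  match w, M.length_le_two hnext with
  | [], _ => exact absurd hL (hnever₁ L q₂)
  | [y], _ =>
    obtain ⟨k₂, hk₂⟩ := hL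
    refine ⟨t + 1 + L, by omega, by omega, q₂, y, ⟨k + (if b then 1 else 0) + k₂, r, ?_⟩, ?_⟩
    · have h₂ := run_append hk₂ (y :: r)
      simp only [List.singleton_append, List.nil_append] at h₂
      simp [run_add_of_eq_some hrun₁, h₂]
    · exact fun L' q₃ hL' => hnever₁ (L + L') q₃ (Empties.append (u := [x]) ⟨k₂, hk₂⟩ hL')

lemma exists_isFloor_mem_Ico [Finite Q] [Finite Γ] {c : Q × List Γ} {q₀ : Q} {γ₀ : Γ}
    (h₀ : M.IsFloor c 0 q₀ γ₀) {a : ℕ} (ha : M.run a c ≠ none) :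
    ∃ t ∈ Set.Ico a (a + 2 ^ Nat.card (Q × Γ)), ∃ q γ, M.IsFloor c t q γ := by
  classical
  set t := Nat.findGreatest (fun t => ∃ q γ, M.IsFloor c t q γ) a
  have hfloor : ∃ q γ, M.IsFloor c t q γ :=
    Nat.findGreatest_spec (P := fun t => ∃ q γ, M.IsFloor c t q γ) (Nat.zero_le a) ⟨q₀, γ₀, h₀⟩
  have hta : t ≤ a := Nat.findGreatest_le a
  rcases hta.lt_or_eq with hta | hta
  · obtain ⟨q, γ, hfloor⟩ := hfloor
    obtain ⟨t', htt', ht'B, hfloor'⟩ :=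
      hfloor.exists_next fun h => ha (run_eq_none_of_le h (by omega))
    have : a < t' := not_le.mp fun h => Nat.findGreatest_is_greatest htt' h hfloor'
    exact ⟨t', ⟨this.le, by omega⟩, hfloor'⟩
  · exact ⟨t, ⟨hta.ge, by rw [hta]; exact Nat.lt_add_of_pos_right (Nat.two_pow_pos _)⟩, hfloor⟩

lemma exists_isFloor_pair [Finite Q] [Finite Γ] {c : Q × List Γ} {q₀ : Q} {γ₀ : Γ}
    (h₀ : M.IsFloor c 0 q₀ γ₀)
    (hdef : M.run (Nat.card (Q × Γ) * 2 ^ Nat.card (Q × Γ)) c ≠ none) :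
    ∃ t₁ t₂ q γ, t₁ < t₂ ∧ t₂ < (Nat.card (Q × Γ) + 1) * 2 ^ Nat.card (Q × Γ) ∧
      M.IsFloor c t₁ q γ ∧ M.IsFloor c t₂ q γ := by
  set m := Nat.card (Q × Γ)
  set B := 2 ^ m
  have hwindow (i : Fin (m + 1)) :
      ∃ t ∈ Set.Ico (i * B) (i * B + B), ∃ q γ, M.IsFloor c t q γ :=
    exists_isFloor_mem_Ico h₀ fun h =>
      hdef (run_eq_none_of_le h (Nat.mul_le_mul_right B (Nat.lt_succ_iff.mp i.isLt)))
  choose t ht q γ hfloor using hwindow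
  have : Fintype Q := Fintype.ofFinite Q
  have : Fintype Γ := Fintype.ofFinite Γ
  obtain ⟨i, j, hij, hq⟩ := Fintype.exists_ne_map_eq_of_card_lt (fun i => (q i, γ i))
    (by simp [m, Nat.card_eq_fintype_card])
  have key : ∀ i j : Fin (m + 1), i < j → (q i, γ i) = (q j, γ j) →
      ∃ t₁ t₂ q γ, t₁ < t₂ ∧ t₂ < (m + 1) * B ∧ M.IsFloor c t₁ q γ ∧ M.IsFloor c t₂ q γ := by
    intro i j hij hq
    obtain ⟨hqij, hγij⟩ := Prod.mk.inj hq
    have hi := ht i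
    have hj := ht j
    have hij' : (i + 1 : ℕ) * B ≤ j * B := Nat.mul_le_mul_right B hij
    have hjm : (j + 1 : ℕ) * B ≤ (m + 1) * B := Nat.mul_le_mul_right B (by omega)
    rw [add_one_mul] at hij' hjm
    simp only [Set.mem_Ico] at hi hj
    exact ⟨t i, t j, q i, γ i, by omega, by omega, hfloor i, hqij ▸ hγij ▸ hfloor j⟩
  rcases lt_or_gt_of_ne hij with hij | hij
  · exact key i j hij hq
  · exact key j i hij hq.symm

lemma IsFloor.exists_run_add {c : Q × List Γ} {t : ℕ} {q : Q} {γ : Γ} (h : M.IsFloor c t q γ) :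
    ∃ k r, ∀ d,
      M.run (t + d) c = (M.run d (q, [γ])).map fun (k', q', u) => (k + k', q', u ++ r) := by
  obtain ⟨⟨k, r, hrun⟩, hnever⟩ := h
  refine ⟨k, r, fun d => ?_⟩
  rw [run_add_of_eq_some hrun, ← List.singleton_append, run_append_eq_map hnever, Option.map_map]
  rfl

theorem exists_eventually_periodic_of_isFloor (F : Set Q) {c : Q × List Γ} {t₁ t₂ : ℕ} {q : Q}
    {γ : Γ} (ht : t₁ < t₂) (h₁ : M.IsFloor c t₁ q γ) (h₂ : M.IsFloor c t₂ q γ) :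
    ∃ N p, 0 < p ∧ N + p ≤ t₂ + 2 ∧
      ∀ n, N ≤ n → (n ∈ M.acceptedCounts F c ↔ n + p ∈ M.acceptedCounts F c) := by
  obtain ⟨k₁, r₁, hrun₁⟩ := h₁.exists_run_add
  obtain ⟨k₂, r₂, hrun₂⟩ := h₂.exists_run_add
  have hk₁ : M.run t₁ c = some (k₁, q, γ :: r₁) := by simpa using hrun₁ 0
  have hk₂ : M.run t₂ c = some (k₂, q, γ :: r₂) := by simpa using hrun₂ 0
  have hk : k₁ ≤ k₂ := count_le_count_of_le hk₁ hk₂ ht.le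
  have hbefore {t n t' k' c₁ c₂} (h : M.run t c = some (n, c₁)) (h' : M.run t' c = some (k', c₂))
      (htt' : t < t') : n ≤ k' := count_le_count_of_le h h' htt'.le
  let Acc t n := ∃ q' s, M.run t c = some (n, q', s) ∧ q' ∈ F
  have hshift (d n : ℕ) : Acc (t₁ + d) n ↔ Acc (t₂ + d) (n + (k₂ - k₁)) := by
    simp only [Acc, hrun₁, hrun₂]
    cases M.run d (q, [γ]) with
    | none => simp
    | some x =>
      simp only [Option.map_some, Option.some_inj, Prod.mk.injEq]
      constructor <;> rintro ⟨_, _, ⟨h, rfl, rfl⟩, hF⟩ <;> exact ⟨_, _, ⟨by omega, rfl, rfl⟩, hF⟩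
  obtain ⟨N, p, hp, hNp, hper⟩ := exists_eventually_periodic_of_shift Acc ht hk
    (fun t n ⟨_, _, h, _⟩ => hbefore h hk₁) (fun t n ⟨_, _, h, _⟩ => hbefore h hk₂) hshift
  exact ⟨N, p, hp, by linarith [count_le_of_run_eq_some hk₂], hper⟩

theorem exists_eventually_periodic_acceptedCounts [Finite Q] [Finite Γ] (F : Set Q) (q₀ : Q)
    (γ₀ : Γ) :
    ∃ N p, 0 < p ∧ N + p ≤ (Nat.card (Q × Γ) + 1) * 2 ^ Nat.card (Q × Γ) + 1 ∧
      ∀ n, N ≤ n → (n ∈ M.acceptedCounts F (q₀, [γ₀]) ↔ n + p ∈ M.acceptedCounts F (q₀, [γ₀])) := by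
  have : Nonempty (Q × Γ) := ⟨(q₀, γ₀)⟩
  have hB : 2 ^ Nat.card (Q × Γ) ≤ Nat.card (Q × Γ) * 2 ^ Nat.card (Q × Γ) :=
    Nat.le_mul_of_pos_left _ Nat.card_pos
  have hB' : Nat.card (Q × Γ) * 2 ^ Nat.card (Q × Γ) + 1 ≤
      (Nat.card (Q × Γ) + 1) * 2 ^ Nat.card (Q × Γ) + 1 :=
    Nat.add_le_add_right (Nat.mul_le_mul_right _ (Nat.le_succ _)) 1
  by_cases hdef : M.run (Nat.card (Q × Γ) * 2 ^ Nat.card (Q × Γ)) (q₀, [γ₀]) = none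
  · have hlt : ∀ n ∈ M.acceptedCounts F (q₀, [γ₀]),
        n < Nat.card (Q × Γ) * 2 ^ Nat.card (Q × Γ) := by
      rintro n ⟨t, q, s, h, -⟩
      exact (count_le_of_run_eq_some h).trans_lt <|
        not_le.mp fun ht => by simp [run_eq_none_of_le hdef ht] at h
    refine ⟨_, 1, one_pos, hB', fun n hn => ?_⟩
    exact iff_of_false (fun h => by linarith [hlt n h]) (fun h => by linarith [hlt _ h])
  · have h₀ : M.IsFloor (q₀, [γ₀]) 0 q₀ γ₀ :=
      ⟨⟨0, [], rfl⟩, fun L q' hL =>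
        hdef (hL.run_eq_none ((PopsIn.lt_two_pow ⟨q', hL⟩).trans_le hB))⟩
    obtain ⟨t₁, t₂, q, γ, ht, ht₂, h₁, h₂⟩ := exists_isFloor_pair h₀ hdef
    obtain ⟨N, p, hp, hNp, hper⟩ := exists_eventually_periodic_of_isFloor F ht h₁ h₂
    exact ⟨N, p, hp, by omega, hper⟩

end StackMachine

namespace PrePDA

variable {Q Γ : Type} {A : PrePDA Q Γ}

lemma Steps.head {c c₁ c₂ : Q × List Γ} {σ : Bool} {k : ℕ} (hm : A.Move c σ c₁)
    (hs : A.Steps c₁ k c₂) : A.Steps c ((if σ then 1 else 0) + k) c₂ := by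
  induction hs with
  | refl => simpa using (Steps.refl c).tail hm
  | tail _ hm' ih => rw [← add_assoc]; exact ih.tail hm'

lemma IsStack.ne_nil {s : List Γ} (h : A.IsStack s) : s ≠ [] := by
  obtain ⟨s, -, rfl⟩ := h
  simp

lemma IsStack.cons {γ : Γ} {s : List Γ} (h : A.IsStack (γ :: s)) :
    (γ = A.bot ∧ s = []) ∨ (γ ≠ A.bot ∧ A.IsStack s) := by
  obtain ⟨_ | ⟨x, s'⟩, hbot, he⟩ := h
  · simp only [List.nil_append, List.cons.injEq] at he
    exact Or.inl he
  · simp only [List.cons_append, List.cons.injEq] at he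
    obtain ⟨rfl, rfl⟩ := he
    simp only [List.mem_cons, not_or] at hbot
    exact Or.inr ⟨Ne.symm hbot.1, s', hbot.2, rfl⟩

end PrePDA

namespace UDPDA

variable {Q Γ : Type} (A : UDPDA Q Γ)

open Classical in
/-- Popping `⊥` leaves the stack `[⊥]` unchanged, so it is recorded as replacing `⊥` by `[⊥]`. -/
noncomputable def topMove (q : Q) (γ : Γ) : Option (Bool × Q × List Γ) :=
  if h : ∃ x : Bool × Q × List Γ, (q, x.1, γ, x.2.1, x.2.2) ∈ A.δ then
    some (h.choose.1, h.choose.2.1,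
      if γ = A.bot ∧ h.choose.2.2 = [] then [A.bot] else h.choose.2.2)
  else none

variable {A}

open Classical in
lemma topMove_eq_some {q q' : Q} {γ : Γ} {b : Bool} {w' : List Γ}
    (h : A.topMove q γ = some (b, q', w')) :
    ∃ w, (q, b, γ, q', w) ∈ A.δ ∧ w' = if γ = A.bot ∧ w = [] then [A.bot] else w := by
  unfold topMove at h
  by_cases hex : ∃ x : Bool × Q × List Γ, (q, x.1, γ, x.2.1, x.2.2) ∈ A.δ
  swap
  · simp [hex] at h
  rw [dif_pos hex, Option.some_inj, Prod.mk.injEq, Prod.mk.injEq] at h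
  obtain ⟨rfl, rfl, rfl⟩ := h
  exact ⟨_, hex.choose_spec, rfl⟩

lemma topMove_ne_none {q q' : Q} {γ : Γ} {b : Bool} {w : List Γ} (h : (q, b, γ, q', w) ∈ A.δ) :
    A.topMove q γ ≠ none := by
  unfold topMove
  rw [dif_pos ⟨(b, q', w), h⟩]
  exact Option.some_ne_none _

lemma move_of_topMove {q q' : Q} {γ : Γ} {s w' : List Γ} {b : Bool} (hs : A.IsStack (γ :: s))
    (h : A.topMove q γ = some (b, q', w')) : A.Move (q, γ :: s) b (q', w' ++ s) := by
  obtain ⟨w, hδ, rfl⟩ := topMove_eq_some h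
  by_cases hbot : γ = A.bot ∧ w = []
  · obtain ⟨rfl, rfl⟩ := hbot
    obtain ⟨-, rfl⟩ | ⟨hne, -⟩ := hs.cons
    · exact ⟨A.bot, [], hδ, Or.inr ⟨rfl, rfl, rfl, by simp⟩⟩
    · exact absurd rfl hne
  · rw [if_neg hbot]
    exact ⟨γ, w, hδ, Or.inl ⟨not_and_or.mp hbot, s, rfl, rfl⟩⟩

lemma topMove_of_move {q : Q} {γ : Γ} {s : List Γ} {b : Bool} {c : Q × List Γ}
    (hs : A.IsStack (γ :: s)) (h : A.Move (q, γ :: s) b c) :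
    ∃ w', A.topMove q γ = some (b, c.1, w') ∧ c.2 = w' ++ s := by
  have hne : A.topMove q γ ≠ none := by
    obtain ⟨γ', w, hδ, ⟨-, s', he, -⟩ | ⟨rfl, -, he, -⟩⟩ := h
    · obtain ⟨rfl, -⟩ := List.cons.inj he
      exact topMove_ne_none hδ
    · obtain ⟨rfl, -⟩ := List.cons.inj he
      exact topMove_ne_none hδ
  obtain ⟨⟨b', q', w'⟩, hmove⟩ := Option.ne_none_iff_exists'.mp hne
  obtain ⟨rfl, rfl⟩ := A.det _ _ _ _ _ hs h (move_of_topMove hs hmove)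
  exact ⟨w', hmove, rfl⟩

lemma isStack_of_topMove {q q' : Q} {γ : Γ} {s w' : List Γ} {b : Bool} (hs : A.IsStack (γ :: s))
    (h : A.topMove q γ = some (b, q', w')) : A.IsStack (w' ++ s) := by
  obtain ⟨w, hδ, rfl⟩ := topMove_eq_some h
  have hwf := (A.wf _ _ _ _ _ hδ).2
  rcases hs.cons with ⟨rfl, rfl⟩ | ⟨hγ, s', hs', rfl⟩
  · by_cases hw : w = []
    · rw [if_pos ⟨rfl, hw⟩]
      exact ⟨[], List.not_mem_nil, rfl⟩
    · rw [if_neg fun h => hw h.2]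
      obtain ⟨hne, -⟩ | ⟨-, hw' | ⟨w'', hw'', rfl⟩⟩ := hwf
      · exact absurd rfl hne
      · exact absurd hw' hw
      · exact ⟨w'', hw'', List.append_nil _⟩
  · rw [if_neg fun h => hγ h.1]
    obtain ⟨-, hw⟩ | ⟨hγ', -⟩ := hwf
    · exact ⟨w ++ s', by simp [hw, hs'], by simp⟩
    · exact absurd hγ' hγ

lemma length_topMove_le {q q' : Q} {γ : Γ} {b : Bool} {w' : List Γ}
    (h : A.topMove q γ = some (b, q', w')) : w'.length ≤ 2 := by
  obtain ⟨w, hδ, rfl⟩ := topMove_eq_some h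
  split_ifs
  · simp
  · exact (A.wf _ _ _ _ _ hδ).1

variable (A) in
noncomputable def toStackMachine : StackMachine Q Γ where
  next := A.topMove
  length_le_two := length_topMove_le

lemma isStack_of_run {t k : ℕ} {q q' : Q} {s s' : List Γ} (hs : A.IsStack s)
    (h : A.toStackMachine.run t (q, s) = some (k, q', s')) : A.IsStack s' := by
  induction t generalizing k q s with
  | zero =>
    simp only [StackMachine.run_zero, Option.some_inj, Prod.mk.injEq] at h
    exact h.2.2 ▸ hs
  | succ t ih =>
    obtain _ | ⟨γ, s⟩ := s
    · exact absurd rfl hs.ne_nil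
    obtain ⟨b, q₁, w, k₁, hnext, hrun, -⟩ := StackMachine.run_succ_cons_eq_some.mp h
    exact ih (isStack_of_topMove hs hnext) hrun

lemma steps_of_run {t k : ℕ} {c c' : Q × List Γ} (hc : A.IsStack c.2)
    (h : A.toStackMachine.run t c = some (k, c')) : A.Steps c k c' := by
  induction t generalizing k c with
  | zero =>
    simp only [StackMachine.run_zero, Option.some_inj, Prod.mk.injEq] at h
    obtain ⟨rfl, rfl⟩ := h
    exact .refl c
  | succ t ih =>
    obtain ⟨q, _ | ⟨γ, s⟩⟩ := c
    · exact absurd rfl hc.ne_nil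
    obtain ⟨b, q₁, w, k₁, hnext, hrun, rfl⟩ := StackMachine.run_succ_cons_eq_some.mp h
    exact PrePDA.Steps.head (move_of_topMove hc hnext) (ih (isStack_of_topMove hc hnext) hrun)

lemma exists_run_of_steps {k : ℕ} {c c' : Q × List Γ} (hc : A.IsStack c.2)
    (h : A.Steps c k c') : ∃ t, A.toStackMachine.run t c = some (k, c') := by
  induction h with
  | refl => exact ⟨0, rfl⟩
  | @tail k c₂ σ c₃ _ hm ih =>
    obtain ⟨t, ht⟩ := ih
    have hs₂ : A.IsStack c₂.2 := isStack_of_run hc ht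
    obtain ⟨q₂, _ | ⟨γ, s⟩⟩ := c₂
    · exact absurd rfl hs₂.ne_nil
    obtain ⟨w', hmove, hc₃⟩ := topMove_of_move hs₂ hm
    refine ⟨t + 1, ?_⟩
    rw [StackMachine.run_add_of_eq_some ht, StackMachine.run_succ_cons]
    simp [toStackMachine, hmove, ← hc₃]

theorem lang_eq_acceptedCounts :
    A.lang = A.toStackMachine.acceptedCounts A.final (A.init, [A.bot]) := by
  have hbot : A.IsStack [A.bot] := ⟨[], List.not_mem_nil, rfl⟩
  ext n
  constructor
  · rintro ⟨⟨q, s⟩, h, hq⟩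
    obtain ⟨t, ht⟩ := exists_run_of_steps hbot h
    exact ⟨t, q, s, ht, hq⟩
  · rintro ⟨t, q, s, ht, hq⟩
    exact ⟨(q, s), steps_of_run hbot ht, hq⟩

end UDPDA

lemma succ_mul_two_pow_add_one_le {m : ℕ} (hm : 1 ≤ m) : (m + 1) * 2 ^ m + 1 ≤ 2 ^ (3 * m) := by
  have h₁ : m + 1 ≤ 2 ^ m := Nat.lt_two_pow_self
  have h₂ : 2 ≤ 2 ^ m := by simpa using Nat.pow_le_pow_right two_pos hm
  calc (m + 1) * 2 ^ m + 1 ≤ 2 ^ m * 2 ^ m * 2 := by nlinarith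
    _ ≤ 2 ^ m * 2 ^ m * 2 ^ m := by gcongr
    _ = 2 ^ (3 * m) := by ring

/-- There is an absolute constant `C` such that for every
udpda `A` of size `m`, the language `L(A)` is accepted by a deterministic
finite automaton with at most `2^{C·m}` states. -/
theorem udpda_to_dfa :
    ∃ C : ℕ, ∀ (Q Γ : Type) (A : UDPDA Q Γ),
      ∃ (σ : Type) (_ : Finite σ) (M : DFA Unit σ),
        Nat.card σ ≤ 2 ^ (C * A.size) ∧
        ∀ n : ℕ, List.replicate n () ∈ M.accepts ↔ n ∈ A.lang := by
  refine ⟨3, fun Q Γ A => ?_⟩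
  have := A.finQ
  have := A.finΓ
  have : Nonempty (Q × Γ) := ⟨(A.init, A.bot)⟩
  obtain ⟨N, p, hp, hNp, hper⟩ :=
    A.toStackMachine.exists_eventually_periodic_acceptedCounts A.final A.init A.bot
  rw [← UDPDA.lang_eq_acceptedCounts] at hper
  obtain ⟨M, hM⟩ := exists_dfa_of_eventually_periodic hp hper
  refine ⟨Fin (N + p), inferInstance, M, ?_, hM⟩
  have hsize : Nat.card (Q × Γ) = A.size := Nat.card_prod Q Γ
  rw [Nat.card_eq_fintype_card, Fintype.card_fin]
  rw [hsize] at hNp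
  exact hNp.trans (succ_mul_two_pow_add_one_le (hsize ▸ Nat.card_pos))
end

section
/- There is an absolute constant C such that for all udpda A1 and A2 of sizes m1 and m2 respectively, if L(A1) ⊄ L(A2) then there exists n ≤ 2^{C·(m1+m2)} with a^n ∈ L(A1) and a^n ∉ L(A2). -/
/-! The run of a udpda from its initial configuration is a single sequence of configurations.
Popping a symbol `γ` from state `p` takes a time that depends only on `(p, γ)`; a pop consists of
one move followed by at most two strictly shorter pops of other pairs, so every pop takes fewer
than `2 ^ m` steps, `m = |Q| · |Γ|`. Call a time a stair if the stack never gets lower afterwards: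
consecutive stairs are at most `2 ^ m` steps apart. Two of the first `m + 1` stairs carry the
same state and top symbol, and since after a stair the run never looks below the top symbol, from
the second one the run repeats what it did from the first. Hence `L(A)` is ultimately periodic
with threshold and period at most `2 ^ (2m)`, and a witness of `L(A₁) ⊄ L(A₂)` can be taken below
`max t₁ t₂ + p₁ p₂ ≤ 2 ^ (3 (m₁ + m₂))`. -/

def UltimatelyPeriodic (S : Set ℕ) (t p : ℕ) : Prop :=
  ∀ n, t ≤ n → (n ∈ S ↔ n + p ∈ S)

namespace UltimatelyPeriodic

variable {S T : Set ℕ} {t p : ℕ}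

lemma mono (h : UltimatelyPeriodic S t p) {t' : ℕ} (ht : t ≤ t') : UltimatelyPeriodic S t' p :=
  fun n hn => h n (ht.trans hn)

lemma mul (h : UltimatelyPeriodic S t p) (m : ℕ) : UltimatelyPeriodic S t (m * p) := by
  intro n hn
  induction m with
  | zero => simp
  | succ m ih => rw [ih, Nat.succ_mul, ← Nat.add_assoc]; exact h _ (by omega)

lemma diff (hS : UltimatelyPeriodic S t p) (hT : UltimatelyPeriodic T t p) :
    UltimatelyPeriodic (S \ T) t p := fun n hn => by
  simp only [Set.mem_sdiff, hS n hn, hT n hn]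

lemma of_subset_Iic (h : S ⊆ Set.Iic t) (p : ℕ) : UltimatelyPeriodic S (t + 1) p := by
  have hS : ∀ m, t < m → m ∉ S := fun m hm hmS => (Set.mem_Iic.mp (h hmS)).not_gt hm
  exact fun n hn => iff_of_false (hS n hn) (hS (n + p) (by omega))

lemma exists_lt_of_nonempty (h : UltimatelyPeriodic S t p) (hp : 0 < p) (hne : S.Nonempty) :
    ∃ n < t + p, n ∈ S := by
  classical
  refine ⟨Nat.find hne, not_le.mp fun hge => ?_, Nat.find_spec hne⟩
  obtain ⟨m, hm⟩ := Nat.exists_eq_add_of_le hge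
  have hmem : t + m ∈ S := (h (t + m) (by omega)).mpr (by
    rw [Nat.add_right_comm, ← hm]
    exact Nat.find_spec hne)
  exact Nat.find_min hne (by omega) hmem

lemma exists_mem_diff_lt {t₁ p₁ t₂ p₂ : ℕ} (h₁ : UltimatelyPeriodic S t₁ p₁)
    (h₂ : UltimatelyPeriodic T t₂ p₂) (hp₁ : 0 < p₁) (hp₂ : 0 < p₂) (h : ¬S ⊆ T) :
    ∃ n < max t₁ t₂ + p₁ * p₂, n ∈ S ∧ n ∉ T := by
  have h₁' := (h₁.mono (le_max_left t₁ t₂)).mul p₂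
  have h₂' := (h₂.mono (le_max_right t₁ t₂)).mul p₁
  rw [Nat.mul_comm] at h₁'
  exact (h₁'.diff h₂').exists_lt_of_nonempty (Nat.mul_pos hp₁ hp₂) (Set.sdiff_nonempty.mpr h)

end UltimatelyPeriodic

section Shift

variable {N : ℕ → ℕ} {F : Set ℕ} {i j : ℕ}

lemma ultimatelyPeriodic_image_of_lt (hN : Monotone N) (hF : ∀ r, j + r ∈ F ↔ i + r ∈ F)
    (hshift : ∀ r, N (j + r) + N i = N (i + r) + N j) (hlt : N i < N j) :
    UltimatelyPeriodic (N '' F) (N j) (N j - N i) := by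
  intro n hn
  constructor
  · rintro ⟨m, hm, rfl⟩
    obtain ⟨r, rfl⟩ := Nat.exists_eq_add_of_le
      (le_of_not_gt fun hmi => by have := hN hmi.le; omega : i ≤ m)
    exact ⟨j + r, (hF r).mpr hm, by have := hshift r; omega⟩
  · rintro ⟨m, hm, hmn⟩
    obtain ⟨r, rfl⟩ := Nat.exists_eq_add_of_le
      (le_of_not_gt fun hmj => by have := hN hmj.le; omega : j ≤ m)
    exact ⟨i + r, (hF r).mp hm, by have := hshift r; omega⟩

lemma le_of_shift_of_eq (hN : Monotone N) (hij : i < j)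
    (hshift : ∀ r, N (j + r) + N i = N (i + r) + N j) (heq : N i = N j) (k : ℕ) : N k ≤ N i := by
  have hconst : ∀ m, N (i + m * (j - i)) = N i := by
    intro m
    induction m with
    | zero => simp
    | succ m ih =>
      have := hshift (m * (j - i))
      rw [show i + (m + 1) * (j - i) = j + m * (j - i) by rw [Nat.succ_mul]; omega]
      omega
  calc N k ≤ N (i + k * (j - i)) := hN (by nlinarith [Nat.sub_pos_of_lt hij])
    _ = N i := hconst k

lemma exists_ultimatelyPeriodic_image (hN : Monotone N) (hij : i < j)
    (hF : ∀ r, j + r ∈ F ↔ i + r ∈ F) (hshift : ∀ r, N (j + r) + N i = N (i + r) + N j) :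
    ∃ p, 0 < p ∧ p ≤ max 1 (N j) ∧ UltimatelyPeriodic (N '' F) (N j + 1) p := by
  rcases (hN hij.le).lt_or_eq with hlt | heq
  · exact ⟨N j - N i, by omega, by omega,
      (ultimatelyPeriodic_image_of_lt hN hF hshift hlt).mono (Nat.le_succ _)⟩
  · refine ⟨1, one_pos, le_max_left _ _, UltimatelyPeriodic.of_subset_Iic ?_ 1⟩
    rintro _ ⟨k, -, rfl⟩
    exact heq ▸ le_of_shift_of_eq hN hij hshift heq k

end Shift

namespace PrePDA

variable {Q Γ : Type} {A : PrePDA Q Γ}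

lemma isStack_bot : A.IsStack [A.bot] := ⟨[], List.not_mem_nil, rfl⟩

lemma IsStack.append {w s : List Γ} (h : A.IsStack s) (hw : A.bot ∉ w) : A.IsStack (w ++ s) := by
  obtain ⟨s', hs', rfl⟩ := h
  exact ⟨w ++ s', by simp [hw, hs'], by simp⟩

lemma IsStack.head_eq_bot_iff {γ : Γ} {s : List Γ} (h : A.IsStack (γ :: s)) :
    γ = A.bot ↔ s = [] := by
  obtain ⟨_ | ⟨a, s'⟩, hs', he⟩ := h
  · simp_all
  · obtain ⟨rfl, rfl⟩ : γ = a ∧ s = s' ++ [A.bot] := by simpa using he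
    simp only [List.append_eq_nil_iff, List.cons_ne_nil, and_false, iff_false]
    exact fun h => hs' (h ▸ List.mem_cons_self)

lemma IsStack.tail {γ : Γ} {s : List Γ} (h : A.IsStack (γ :: s)) (hγ : γ ≠ A.bot) :
    A.IsStack s := by
  obtain ⟨_ | ⟨a, s'⟩, hs', he⟩ := h
  · simp_all
  · obtain ⟨rfl, rfl⟩ : γ = a ∧ s = s' ++ [A.bot] := by simpa using he
    exact ⟨s', fun h => hs' (List.mem_cons_of_mem _ h), rfl⟩

/-- A move only inspects the top symbol, unless the stack is `[⊥]`. -/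
lemma Move.change_bottom {q : Q} {τ ρ : List Γ} (ρ' : List Γ) (hτ : τ ≠ []) (hρ : ρ ≠ [])
    {σ : Bool} {c : Q × List Γ} (hm : A.Move (q, τ ++ ρ) σ c) :
    ∃ τ₂, c.2 = τ₂ ++ ρ ∧ A.Move (q, τ ++ ρ') σ (c.1, τ₂ ++ ρ') := by
  obtain ⟨a, τ₁, rfl⟩ := List.exists_cons_of_ne_nil hτ
  obtain ⟨γ, w, ht, ⟨hne, u, hc, hc'⟩ | ⟨-, -, hc, -⟩⟩ := hm
  · obtain ⟨rfl, rfl⟩ : γ = a ∧ u = τ₁ ++ ρ := by simpa [eq_comm] using hc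
    exact ⟨w ++ τ₁, by simp [hc'], γ, w, ht, Or.inl ⟨hne, τ₁ ++ ρ', rfl, by simp⟩⟩
  · simp only [List.cons_append, List.cons.injEq, List.append_eq_nil_iff] at hc
    exact absurd hc.2.2 hρ

end PrePDA

namespace UDPDA

variable {Q Γ : Type} (A : UDPDA Q Γ)

lemma size_pos : 0 < A.size := by
  have := A.finQ
  have := A.finΓ
  have : Nonempty Q := ⟨A.init⟩
  have : Nonempty Γ := ⟨A.bot⟩
  exact Nat.mul_pos Nat.card_pos Nat.card_pos

variable {A}

lemma move_cases {c c' : Q × List Γ} {σ : Bool} (hm : A.Move c σ c') :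
    (∃ γ w u, c.2 = γ :: u ∧ c'.2 = w ++ u ∧ w.length ≤ 2 ∧
        ((γ ≠ A.bot ∧ A.bot ∉ w) ∨ (γ = A.bot ∧ ∃ w', A.bot ∉ w' ∧ w = w' ++ [A.bot]))) ∨
      (c.2 = [A.bot] ∧ c'.2 = [A.bot]) := by
  obtain ⟨γ, w, ht, ⟨hne, u, hc, hc'⟩ | ⟨-, -, hc, hc'⟩⟩ := hm
  · obtain ⟨hlen, hwf | ⟨hγ, rfl | hw⟩⟩ := A.wf _ _ _ _ _ ht
    · exact Or.inl ⟨γ, w, u, hc, hc', hlen, Or.inl hwf⟩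
    · simp_all
    · exact Or.inl ⟨γ, w, u, hc, hc', hlen, Or.inr ⟨hγ, hw⟩⟩
  · exact Or.inr ⟨hc, hc'⟩

lemma isStack_of_move {c c' : Q × List Γ} {σ : Bool} (hm : A.Move c σ c')
    (hv : A.IsStack c.2) : A.IsStack c'.2 := by
  rcases move_cases hm with ⟨γ, w, u, hc, hc', -, ⟨hγ, hw⟩ | ⟨hγ, w', hw', rfl⟩⟩ | ⟨-, hc'⟩
  · rw [hc']
    exact ((hc ▸ hv).tail hγ).append hw
  · have hu : u = [] := ((hc ▸ hv).head_eq_bot_iff).mp hγ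
    rw [hc', hu, List.append_nil]
    exact PrePDA.isStack_bot.append hw'
  · exact hc' ▸ PrePDA.isStack_bot

lemma length_le_of_move {c c' : Q × List Γ} {σ : Bool} (hm : A.Move c σ c') :
    c'.2.length ≤ c.2.length + 1 := by
  rcases move_cases hm with ⟨γ, w, u, hc, hc', hw, -⟩ | ⟨hc, hc'⟩
  · simp only [hc, hc', List.length_append, List.length_cons]
    omega
  · simp [hc, hc']

lemma eq_append_of_move_of_ne_bot {q : Q} {γ : Γ} {s : List Γ} {σ : Bool} {c' : Q × List Γ}
    (hm : A.Move (q, γ :: s) σ c') (hγ : γ ≠ A.bot) :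
    ∃ w, c'.2 = w ++ s ∧ w.length ≤ 2 ∧ A.bot ∉ w := by
  rcases move_cases hm with ⟨γ', w, u, hc, hc', hw, hwf⟩ | ⟨hc, -⟩
  · obtain ⟨rfl, rfl⟩ : γ = γ' ∧ s = u := by simpa using hc
    exact ⟨w, hc', hw, hwf.resolve_right (fun h => hγ h.1) |>.2⟩
  · exact absurd (List.cons_eq_cons.mp hc).1 hγ

variable (A)

def CanMove (c : Q × List Γ) : Prop := ∃ m : Bool × (Q × List Γ), A.Move c m.1 m.2

/-- A configuration without a move is its own successor, reading nothing. -/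
noncomputable def next (c : Q × List Γ) : Bool × (Q × List Γ) :=
  open Classical in
  if h : A.CanMove c then h.choose else (false, c)

variable {A}

lemma move_next {c : Q × List Γ} (h : A.CanMove c) :
    A.Move c (A.next c).1 (A.next c).2 := by
  rw [next, dif_pos h]
  exact h.choose_spec

lemma next_of_not_move {c : Q × List Γ} (h : ¬A.CanMove c) :
    A.next c = (false, c) := by
  rw [next, dif_neg h]

lemma next_eq_of_move {c c' : Q × List Γ} {σ : Bool} (hv : A.IsStack c.2)
    (hm : A.Move c σ c') : A.next c = (σ, c') := by
  obtain ⟨h1, h2⟩ := A.det c _ _ _ _ hv (move_next ⟨(σ, c'), hm⟩) hm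
  exact Prod.ext h1 h2

variable (A)

noncomputable def step (c : Q × List Γ) : Q × List Γ := (A.next c).2

noncomputable def reads (c : Q × List Γ) : ℕ := if (A.next c).1 then 1 else 0

noncomputable def run (c : Q × List Γ) (i : ℕ) : Q × List Γ := A.step^[i] c

noncomputable def count (c : Q × List Γ) (i : ℕ) : ℕ :=
  ∑ r ∈ Finset.range i, A.reads (A.run c r)

def start : Q × List Γ := (A.init, [A.bot])

variable {A}

lemma run_succ (c : Q × List Γ) (i : ℕ) : A.run c (i + 1) = A.step (A.run c i) :=
  Function.iterate_succ_apply' _ _ _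

lemma run_add (c : Q × List Γ) (i j : ℕ) : A.run c (i + j) = A.run (A.run c i) j := by
  rw [run, run, run, Nat.add_comm, Function.iterate_add_apply]

lemma count_succ (c : Q × List Γ) (i : ℕ) :
    A.count c (i + 1) = A.count c i + A.reads (A.run c i) :=
  Finset.sum_range_succ _ _

lemma count_add (c : Q × List Γ) (i j : ℕ) :
    A.count c (i + j) = A.count c i + A.count (A.run c i) j := by
  simp only [count, Finset.sum_range_add, run_add]

lemma count_mono (c : Q × List Γ) : Monotone (A.count c) := fun i j hij => by
  obtain ⟨k, rfl⟩ := Nat.exists_eq_add_of_le hij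
  rw [count_add]
  exact Nat.le_add_right _ _

lemma count_le (c : Q × List Γ) (i : ℕ) : A.count c i ≤ i := by
  simpa [count] using Finset.sum_le_card_nsmul (Finset.range i) (fun r => A.reads (A.run c r)) 1
    fun r _ => by unfold reads; split <;> simp

lemma isStack_run {c : Q × List Γ} (hv : A.IsStack c.2) (i : ℕ) : A.IsStack (A.run c i).2 := by
  induction i with
  | zero => exact hv
  | succ i ih =>
    rw [run_succ, step]
    by_cases h : A.CanMove (A.run c i)
    · exact isStack_of_move (move_next h) ih
    · rwa [next_of_not_move h]

lemma length_step_le (c : Q × List Γ) : (A.step c).2.length ≤ c.2.length + 1 := by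
  rw [step]
  by_cases h : A.CanMove c
  · exact length_le_of_move (move_next h)
  · simp [next_of_not_move h]

lemma run_count_succ_of_next {c c' : Q × List Γ} {i : ℕ} {σ : Bool}
    (h : A.next (A.run c i) = (σ, c')) :
    A.run c (i + 1) = c' ∧ A.count c (i + 1) = A.count c i + if σ then 1 else 0 := by
  rw [run_succ, count_succ, step, reads, h]
  exact ⟨rfl, rfl⟩

lemma steps_iff {c c' : Q × List Γ} {k : ℕ} (hv : A.IsStack c.2) :
    A.Steps c k c' ↔ ∃ i, A.run c i = c' ∧ A.count c i = k := by
  constructor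
  · intro h
    induction h with
    | refl => exact ⟨0, rfl, rfl⟩
    | tail _ hm ih =>
      obtain ⟨i, rfl, rfl⟩ := ih
      exact ⟨i + 1, run_count_succ_of_next (next_eq_of_move (isStack_run hv i) hm)⟩
  · rintro ⟨i, rfl, rfl⟩
    induction i with
    | zero => exact .refl c
    | succ i ih =>
      by_cases h : A.CanMove (A.run c i)
      · obtain ⟨h1, h2⟩ := run_count_succ_of_next (c := c) (i := i) rfl
        rw [h1, h2]
        exact ih.tail (move_next h)
      · obtain ⟨h1, h2⟩ := run_count_succ_of_next (next_of_not_move h)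
        rwa [h1, h2, if_neg Bool.false_ne_true, Nat.add_zero]

lemma lang_eq_image : A.lang = A.count A.start '' {i | (A.run A.start i).1 ∈ A.final} := by
  ext n
  simp only [lang, PrePDA.lang, Set.mem_image]
  constructor
  · rintro ⟨c, hs, hc⟩
    obtain ⟨i, rfl, rfl⟩ := (steps_iff PrePDA.isStack_bot).mp hs
    exact ⟨i, hc, rfl⟩
  · rintro ⟨i, hi, rfl⟩
    exact ⟨_, (steps_iff PrePDA.isStack_bot).mpr ⟨i, rfl, rfl⟩, hi⟩

lemma next_change_bottom {q : Q} {τ ρ ρ' : List Γ} (hτ : τ ≠ []) (hρ : ρ ≠ []) (hρ' : ρ' ≠ [])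
    (hv' : A.IsStack (τ ++ ρ')) :
    ∃ b q' τ₂, A.next (q, τ ++ ρ) = (b, q', τ₂ ++ ρ) ∧ A.next (q, τ ++ ρ') = (b, q', τ₂ ++ ρ') := by
  by_cases h : A.CanMove (q, τ ++ ρ)
  · obtain ⟨τ₂, h₁, h₂⟩ := (move_next h).change_bottom ρ' hτ hρ
    exact ⟨_, _, τ₂, Prod.ext rfl (Prod.ext rfl h₁), next_eq_of_move hv' h₂⟩
  · have h' : ¬A.CanMove (q, τ ++ ρ') := by
      rintro ⟨m, hm⟩
      obtain ⟨τ₂, -, hm'⟩ := hm.change_bottom ρ hτ hρ'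
      exact h ⟨(m.1, m.2.1, τ₂ ++ ρ), hm'⟩
    exact ⟨false, q, τ, next_of_not_move h, next_of_not_move h'⟩

lemma run_change_bottom {q : Q} {τ ρ ρ' : List Γ} (hρ : ρ ≠ []) (hρ' : ρ' ≠ [])
    (hv' : A.IsStack (τ ++ ρ')) (t : ℕ)
    (hh : ∀ r < t, ρ.length < (A.run (q, τ ++ ρ) r).2.length) :
    ∃ q' τ', A.run (q, τ ++ ρ) t = (q', τ' ++ ρ) ∧ A.run (q, τ ++ ρ') t = (q', τ' ++ ρ') ∧
      A.count (q, τ ++ ρ') t = A.count (q, τ ++ ρ) t := by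
  induction t with
  | zero => exact ⟨q, τ, rfl, rfl, rfl⟩
  | succ t ih =>
    obtain ⟨q', τ', h₁, h₂, h₃⟩ := ih fun r hr => hh r (by omega)
    have hτ' : τ' ≠ [] := by
      rintro rfl
      simpa [h₁] using hh t (by omega)
    have hv₂ := isStack_run (c := (q, τ ++ ρ')) hv' t
    rw [h₂] at hv₂
    obtain ⟨b, q'', τ₂, hn₁, hn₂⟩ := next_change_bottom (q := q') hτ' hρ hρ' hv₂
    obtain ⟨hr₁, hc₁⟩ := run_count_succ_of_next (c := (q, τ ++ ρ)) (i := t) (by rw [h₁, hn₁])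
    obtain ⟨hr₂, hc₂⟩ := run_count_succ_of_next (c := (q, τ ++ ρ')) (i := t) (by rw [h₂, hn₂])
    exact ⟨q'', τ₂, hr₁, hr₂, by rw [hc₁, hc₂, h₃]⟩

lemma run_agree_of_stays_above {q : Q} {γ : Γ} {ρ ρ' : List Γ} (hv : A.IsStack (γ :: ρ))
    (hv' : A.IsStack (γ :: ρ')) (hh : ∀ r, ρ.length < (A.run (q, γ :: ρ) r).2.length) (r : ℕ) :
    (A.run (q, γ :: ρ') r).1 = (A.run (q, γ :: ρ) r).1 ∧
      A.count (q, γ :: ρ') r = A.count (q, γ :: ρ) r := by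
  by_cases hγ : γ = A.bot
  · rw [hv.head_eq_bot_iff.mp hγ, hv'.head_eq_bot_iff.mp hγ]
    exact ⟨rfl, rfl⟩
  · obtain ⟨q', τ', h₁, h₂, h₃⟩ := run_change_bottom (τ := [γ]) (mt hv.head_eq_bot_iff.mpr hγ)
      (mt hv'.head_eq_bot_iff.mpr hγ) hv' r fun s _ => hh s
    have h₁ : A.run (q, γ :: ρ) r = (q', τ' ++ ρ) := h₁
    have h₂ : A.run (q, γ :: ρ') r = (q', τ' ++ ρ') := h₂
    exact ⟨by rw [h₁, h₂], h₃⟩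

variable (A)

def ReachesBottomAt (c : Q × List Γ) (t : ℕ) : Prop :=
  (A.run c t).2.length = 1 ∧ ∀ r < t, 1 < (A.run c r).2.length

def PopsAt (p : Q) (γ : Γ) (t : ℕ) : Prop :=
  γ ≠ A.bot ∧ A.ReachesBottomAt (p, [γ, A.bot]) t

variable {A}

lemma ReachesBottomAt.unique {c : Q × List Γ} {t t' : ℕ} (h : A.ReachesBottomAt c t)
    (h' : A.ReachesBottomAt c t') : t = t' := by
  by_contra hne
  rcases Nat.lt_or_gt_of_ne hne with hlt | hlt
  · have := h'.2 t hlt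
    have := h.1
    omega
  · have := h.2 t' hlt
    have := h'.1
    omega

lemma ReachesBottomAt.of_add {c : Q × List Γ} {k t : ℕ} (h : A.ReachesBottomAt c (k + t)) :
    A.ReachesBottomAt (A.run c k) t := by
  refine ⟨by rw [← run_add]; exact h.1, fun r hr => ?_⟩
  rw [← run_add]
  exact h.2 _ (by omega)

lemma PopsAt.unique {p : Q} {γ : Γ} {t t' : ℕ} (h : A.PopsAt p γ t) (h' : A.PopsAt p γ t') :
    t = t' :=
  h.2.unique h'.2

lemma popsAt_of_run {q : Q} {γ : Γ} {ρ : List Γ} {t : ℕ} (hv : A.IsStack (γ :: ρ))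
    (hγ : γ ≠ A.bot) (ht : (A.run (q, γ :: ρ) t).2.length ≤ ρ.length)
    (hh : ∀ r < t, ρ.length < (A.run (q, γ :: ρ) r).2.length) :
    A.PopsAt q γ t ∧ (A.run (q, γ :: ρ) t).2 = ρ := by
  have hv' : A.IsStack ([γ] ++ [A.bot]) :=
    PrePDA.isStack_bot.append (by simpa using Ne.symm hγ)
  have key : ∀ r ≤ t, ∃ q' τ', A.run (q, γ :: ρ) r = (q', τ' ++ ρ) ∧
      A.run (q, [γ, A.bot]) r = (q', τ' ++ [A.bot]) := fun r hr => by
    obtain ⟨q', τ', h₁, h₂, -⟩ := run_change_bottom (τ := [γ]) (mt hv.head_eq_bot_iff.mpr hγ)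
      (List.cons_ne_nil _ _) hv' r fun s hs => hh s (by omega)
    exact ⟨q', τ', h₁, h₂⟩
  obtain ⟨q', τ', h₁, h₂⟩ := key t le_rfl
  obtain rfl : τ' = [] := by simpa [h₁] using ht
  refine ⟨⟨hγ, by simp [h₂], fun r hr => ?_⟩, by simp [h₁]⟩
  obtain ⟨q'', τ'', h₃, h₄⟩ := key r hr.le
  have := hh r hr
  simp only [h₃, h₄, List.length_append, List.length_singleton] at this ⊢
  omega

lemma ReachesBottomAt.exists_popsAt_popsAt {q : Q} {γ₁ γ₂ : Γ} {s : ℕ} (hγ₁ : γ₁ ≠ A.bot)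
    (hγ₂ : γ₂ ≠ A.bot) (h : A.ReachesBottomAt (q, [γ₁, γ₂, A.bot]) s) :
    ∃ q₂ t₁ t₂, A.PopsAt q γ₁ t₁ ∧ A.PopsAt q₂ γ₂ t₂ ∧ s = t₁ + t₂ := by
  have hex : ∃ r, (A.run (q, [γ₁, γ₂, A.bot]) r).2.length ≤ 2 := ⟨s, by rw [h.1]; omega⟩
  have hv : A.IsStack ([γ₁, γ₂] ++ [A.bot]) :=
    PrePDA.isStack_bot.append (by simp [Ne.symm hγ₁, Ne.symm hγ₂])
  obtain ⟨hpop, hstack⟩ := popsAt_of_run (ρ := [γ₂, A.bot]) hv hγ₁ (Nat.find_spec hex)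
    fun r hr => by simpa using Nat.find_min hex hr
  obtain ⟨t₂, hs⟩ := Nat.exists_eq_add_of_le (Nat.find_min' hex (show _ ≤ 2 by rw [h.1]; omega))
  have h₂ := (hs ▸ h).of_add
  rw [show A.run _ (Nat.find hex) = (_, [γ₂, A.bot]) from Prod.ext rfl hstack] at h₂
  exact ⟨_, _, t₂, hpop, ⟨hγ₂, h₂⟩, hs⟩

/-- A pop takes one move, which pushes at most two symbols, and then pops each of them. -/
lemma PopsAt.decompose {p : Q} {γ : Γ} {t : ℕ} (h : A.PopsAt p γ t) :
    ∃ t₁ t₂, t = t₁ + t₂ + 1 ∧ (t₁ = 0 ∨ ∃ p' γ', A.PopsAt p' γ' t₁) ∧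
      (t₂ = 0 ∨ ∃ p' γ', A.PopsAt p' γ' t₂) := by
  obtain ⟨hγ, hb⟩ := h
  have hmove : A.CanMove (p, [γ, A.bot]) := by
    by_contra hno
    have hfix : A.run (p, [γ, A.bot]) t = (p, [γ, A.bot]) :=
      Function.iterate_fixed (by rw [step, next_of_not_move hno]) t
    simpa [hfix] using hb.1
  obtain ⟨w, hw, hlen, hbot⟩ := eq_append_of_move_of_ne_bot (move_next hmove) hγ
  obtain ⟨t', rfl⟩ : ∃ t', t = 1 + t' := Nat.exists_eq_add_of_le (Nat.one_le_iff_ne_zero.mpr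
    fun ht => by simp [ht, ReachesBottomAt, run] at hb)
  have hb' := hb.of_add
  rw [show A.run _ 1 = (_, w ++ [A.bot]) from Prod.ext rfl hw] at hb'
  rcases w with _ | ⟨γ₁, _ | ⟨γ₂, _ | ⟨γ₃, w⟩⟩⟩
  · obtain rfl : 0 = t' := ReachesBottomAt.unique ⟨rfl, fun _ h => absurd h (Nat.not_lt_zero _)⟩ hb'
    exact ⟨0, 0, rfl, Or.inl rfl, Or.inl rfl⟩
  · exact ⟨t', 0, by omega, Or.inr ⟨_, γ₁, by simpa [eq_comm] using hbot, hb'⟩, Or.inl rfl⟩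
  · simp only [List.mem_cons, List.not_mem_nil, or_false, not_or] at hbot
    obtain ⟨q₂, t₁, t₂, h₁, h₂, rfl⟩ :=
      hb'.exists_popsAt_popsAt (Ne.symm hbot.1) (Ne.symm hbot.2)
    exact ⟨t₁, t₂, by omega, Or.inr ⟨_, _, h₁⟩, Or.inr ⟨_, _, h₂⟩⟩
  · simp at hlen

variable (A)

def poppedBy (t : ℕ) : Set (Q × Γ) := {x | ∃ s ≤ t, A.PopsAt x.1 x.2 s}

variable {A}

/-- Sub-pops are strictly shorter, so by uniqueness of pop times they involve strictly fewer
pairs. -/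
lemma PopsAt.lt_two_pow_ncard {p : Q} {γ : Γ} {t : ℕ} (h : A.PopsAt p γ t) :
    t < 2 ^ (A.poppedBy t).ncard := by
  induction t using Nat.strong_induction_on generalizing p γ with
  | _ t ih =>
  have hfin : (A.poppedBy t).Finite := by
    have := A.finQ
    have := A.finΓ
    exact Set.toFinite _
  have hmem : (p, γ) ∈ A.poppedBy t := ⟨t, le_rfl, h⟩
  have hsub : ∀ s < t, (s = 0 ∨ ∃ p' γ', A.PopsAt p' γ' s) →
      2 * (s + 1) ≤ 2 ^ (A.poppedBy t).ncard := by
    rintro s hst (rfl | ⟨p', γ', hs⟩)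
    · exact Nat.pow_le_pow_right two_pos ((Set.ncard_pos hfin).mpr ⟨_, hmem⟩)
    · have hss : A.poppedBy s ⊂ A.poppedBy t := by
        refine (Set.ssubset_iff_of_subset ?_).mpr ⟨(p, γ), hmem, ?_⟩
        · rintro x ⟨r, hr, hx⟩
          exact ⟨r, hr.trans hst.le, hx⟩
        · rintro ⟨r, hr, hx⟩
          have := hx.unique h
          omega
      calc 2 * (s + 1) ≤ 2 ^ ((A.poppedBy s).ncard + 1) := by
            rw [pow_succ]; linarith [ih s hst hs]
        _ ≤ _ := Nat.pow_le_pow_right two_pos (Set.ncard_lt_ncard hss hfin)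
  obtain ⟨t₁, t₂, rfl, h₁, h₂⟩ := h.decompose
  have := hsub t₁ (by omega) h₁
  have := hsub t₂ (by omega) h₂
  omega

lemma PopsAt.lt_two_pow_size {p : Q} {γ : Γ} {t : ℕ} (h : A.PopsAt p γ t) : t < 2 ^ A.size := by
  have := A.finQ
  have := A.finΓ
  calc t < 2 ^ (A.poppedBy t).ncard := h.lt_two_pow_ncard
    _ ≤ 2 ^ A.size := Nat.pow_le_pow_right two_pos <| by
      simpa [size, Nat.card_prod] using Set.ncard_le_card (A.poppedBy t)

lemma isStack_run_start (i : ℕ) : A.IsStack (A.run A.start i).2 :=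
  isStack_run PrePDA.isStack_bot i

/-- Once the stack drops below its height at time `k`, the symbol on top at time `k` has been
popped, which takes fewer than `2 ^ A.size` steps. -/
lemma lt_two_pow_size_of_drop {k t : ℕ}
    (ht : (A.run A.start (k + t)).2.length < (A.run A.start k).2.length)
    (hh : ∀ r < t, (A.run A.start k).2.length ≤ (A.run A.start (k + r)).2.length) :
    t < 2 ^ A.size := by
  obtain ⟨γ, ρ, hk⟩ := List.exists_cons_of_ne_nil (isStack_run_start (A := A) k).ne_nil
  have hc : A.run A.start k = ((A.run A.start k).1, γ :: ρ) := Prod.ext rfl hk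
  have hv : A.IsStack (γ :: ρ) := hk ▸ isStack_run_start k
  have hρ : ρ ≠ [] := by
    rintro rfl
    rw [hk, List.length_singleton, Nat.lt_one_iff, List.length_eq_zero_iff] at ht
    exact (isStack_run_start (k + t)).ne_nil ht
  simp only [run_add] at ht hh
  rw [hc] at ht hh
  simp only [List.length_cons] at ht hh
  exact (popsAt_of_run hv (mt hv.head_eq_bot_iff.mp hρ) (by omega) hh).1.lt_two_pow_size

variable (A)

def Stair (i : ℕ) : Prop :=
  ∀ r, i ≤ r → (A.run A.start i).2.length ≤ (A.run A.start r).2.length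

variable {A}

lemma stair_zero : A.Stair 0 := fun r _ =>
  List.length_pos_iff.mpr (isStack_run_start r).ne_nil

lemma Stair.exists_next {i : ℕ} (hi : A.Stair i) : ∃ j, A.Stair j ∧ i < j ∧ j ≤ i + 2 ^ A.size := by
  have hstep := length_step_le (A := A) (A.run A.start i)
  rw [← run_succ] at hstep
  have hpow := Nat.one_le_two_pow (n := A.size)
  by_cases hret : ∃ r, i < r ∧ (A.run A.start r).2.length ≤ (A.run A.start i).2.length
  · obtain ⟨hiT, hT⟩ := Nat.find_spec hret
    refine ⟨Nat.find hret, fun r hr => hT.trans (hi r (by omega)), hiT, ?_⟩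
    by_contra! hbig
    have hmin : ∀ r, i < r → r < Nat.find hret →
        (A.run A.start i).2.length < (A.run A.start r).2.length := fun r hr hrT => by
      simpa [hr] using Nat.find_min hret hrT
    have hup := hmin (i + 1) (by omega) (by omega)
    obtain ⟨t, ht⟩ := Nat.exists_eq_add_of_le (show i + 1 ≤ Nat.find hret by omega)
    have := lt_two_pow_size_of_drop (A := A) (k := i + 1) (t := t) (by rw [← ht]; omega)
      fun r hr => by have := hmin (i + 1 + r) (by omega) (by omega); omega
    omega
  · refine ⟨i + 1, fun r hr => ?_, by omega, by omega⟩
    have := not_and.mp (not_exists.mp hret r) (by omega)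
    omega

lemma exists_stairs :
    ∃ s : ℕ → ℕ, StrictMono s ∧ ∀ m, A.Stair (s m) ∧ s m ≤ m * 2 ^ A.size := by
  have : ∀ i, ∃ j, A.Stair i → A.Stair j ∧ i < j ∧ j ≤ i + 2 ^ A.size := fun i => by
    by_cases hi : A.Stair i
    · exact hi.exists_next.imp fun j hj _ => hj
    · exact ⟨0, fun h => absurd h hi⟩
  choose g hg using this
  have hs : ∀ m, A.Stair (g^[m] 0) ∧ g^[m] 0 ≤ m * 2 ^ A.size := by
    intro m
    induction m with
    | zero => exact ⟨stair_zero, Nat.zero_le _⟩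
    | succ m ih =>
      rw [Function.iterate_succ_apply', Nat.succ_mul]
      obtain ⟨h₁, -, h₃⟩ := hg _ ih.1
      exact ⟨h₁, by omega⟩
  refine ⟨fun m => g^[m] 0, strictMono_nat_of_lt_succ fun m => ?_, hs⟩
  simpa only [Function.iterate_succ_apply'] using (hg _ (hs m).1).2.1

/-- From a stair, the run never looks below the top symbol, so it only depends on the state and
that symbol. -/
lemma Stair.run_agree {i j : ℕ} (hi : A.Stair i) (hq : (A.run A.start i).1 = (A.run A.start j).1)
    (hγ : (A.run A.start i).2.headD A.bot = (A.run A.start j).2.headD A.bot) (r : ℕ) :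
    (A.run A.start (j + r)).1 = (A.run A.start (i + r)).1 ∧
      A.count (A.run A.start j) r = A.count (A.run A.start i) r := by
  obtain ⟨γ, ρ, hsi⟩ := List.exists_cons_of_ne_nil (isStack_run_start (A := A) i).ne_nil
  obtain ⟨γ', ρ', hsj⟩ := List.exists_cons_of_ne_nil (isStack_run_start (A := A) j).ne_nil
  obtain rfl : γ = γ' := by simpa [hsi, hsj] using hγ
  have hci : A.run A.start i = ((A.run A.start i).1, γ :: ρ) := Prod.ext rfl hsi
  have hcj : A.run A.start j = ((A.run A.start i).1, γ :: ρ') := Prod.ext hq.symm hsj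
  have hh : ∀ r, ρ.length < (A.run ((A.run A.start i).1, γ :: ρ) r).2.length := fun r => by
    have := hi (i + r) (by omega)
    rw [run_add, hci] at this
    simpa using this
  rw [run_add, run_add, hcj, hci]
  exact run_agree_of_stays_above (hsi ▸ isStack_run_start i) (hsj ▸ isStack_run_start j) hh r

lemma exists_run_repeat : ∃ i j, i < j ∧ j ≤ A.size * 2 ^ A.size ∧ ∀ r,
    (A.run A.start (j + r)).1 = (A.run A.start (i + r)).1 ∧
      A.count A.start (j + r) + A.count A.start i =
        A.count A.start (i + r) + A.count A.start j := by
  obtain ⟨s, hmono, hs⟩ := A.exists_stairs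
  let f : Fin (A.size + 1) → Q × Γ := fun m =>
    ((A.run A.start (s m)).1, (A.run A.start (s m)).2.headD A.bot)
  have hf : ¬Function.Injective f := fun hinj => by
    have := A.finQ
    have := A.finΓ
    have := Nat.card_le_card_of_injective f hinj
    simp [size, Nat.card_prod] at this
  obtain ⟨a, b, hfab, hab⟩ := Function.not_injective_iff.mp hf
  wlog hlt : a < b generalizing a b
  · exact this b a hfab.symm hab.symm (lt_of_le_of_ne (not_lt.mp hlt) hab.symm)
  refine ⟨s a, s b, hmono hlt, ?_, fun r => ?_⟩
  · exact (hs b).2.trans (Nat.mul_le_mul_right _ (Nat.lt_succ_iff.mp b.isLt))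
  · obtain ⟨h₁, h₂⟩ := (hs a).1.run_agree (Prod.ext_iff.mp hfab).1 (Prod.ext_iff.mp hfab).2 r
    refine ⟨h₁, ?_⟩
    rw [count_add, count_add, h₂]
    omega

lemma exists_ultimatelyPeriodic_lang : ∃ t p, 0 < p ∧ t ≤ 2 ^ (2 * A.size) ∧
    p ≤ 2 ^ (2 * A.size) ∧ UltimatelyPeriodic A.lang t p := by
  obtain ⟨i, j, hij, hj, hrep⟩ := A.exists_run_repeat
  obtain ⟨p, hp, hpj, hper⟩ := exists_ultimatelyPeriodic_image (A.count_mono A.start) hij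
    (F := {k | (A.run A.start k).1 ∈ A.final})
    (fun r => by show _ ∈ A.final ↔ _ ∈ A.final; rw [(hrep r).1]) fun r => (hrep r).2
  have hN := A.count_le A.start j
  have hjb : j + 1 ≤ 2 ^ (2 * A.size) := calc
    j + 1 ≤ A.size * 2 ^ A.size + 2 ^ A.size := by have := Nat.one_le_two_pow (n := A.size); omega
    _ = (A.size + 1) * 2 ^ A.size := by ring
    _ ≤ 2 ^ A.size * 2 ^ A.size := Nat.mul_le_mul_right _ Nat.lt_two_pow_self
    _ = 2 ^ (2 * A.size) := by ring
  exact ⟨_, p, hp, by omega, by omega, lang_eq_image ▸ hper⟩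

end UDPDA

/-- There is an absolute constant `C` such that for all
udpda `A1`, `A2` of sizes `m1`, `m2`: if `L(A1) ⊄ L(A2)`, then some
`n ≤ 2^{C·(m1+m2)}` satisfies `a^n ∈ L(A1)` and `a^n ∉ L(A2)`. -/
theorem udpda_inclusion_small_witness :
    ∃ C : ℕ, ∀ (Q1 Γ1 Q2 Γ2 : Type) (A1 : UDPDA Q1 Γ1) (A2 : UDPDA Q2 Γ2),
      ¬(A1.lang ⊆ A2.lang) →
      ∃ n : ℕ, n ≤ 2 ^ (C * (A1.size + A2.size)) ∧ n ∈ A1.lang ∧ n ∉ A2.lang := by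
  refine ⟨3, fun Q1 Γ1 Q2 Γ2 A1 A2 hsub => ?_⟩
  obtain ⟨t₁, p₁, hp₁, ht₁, hq₁, h₁⟩ := A1.exists_ultimatelyPeriodic_lang
  obtain ⟨t₂, p₂, hp₂, ht₂, hq₂, h₂⟩ := A2.exists_ultimatelyPeriodic_lang
  obtain ⟨n, hn, hn₁, hn₂⟩ := h₁.exists_mem_diff_lt h₂ hp₁ hp₂ hsub
  refine ⟨n, ?_, hn₁, hn₂⟩
  have hS := A1.size_pos
  calc n ≤ max t₁ t₂ + p₁ * p₂ := hn.le
    _ ≤ 2 ^ (2 * (A1.size + A2.size)) + 2 ^ (2 * A1.size) * 2 ^ (2 * A2.size) :=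
        add_le_add (max_le (ht₁.trans (Nat.pow_le_pow_right two_pos (by omega)))
          (ht₂.trans (Nat.pow_le_pow_right two_pos (by omega)))) (Nat.mul_le_mul hq₁ hq₂)
    _ = 2 ^ (2 * (A1.size + A2.size) + 1) := by ring
    _ ≤ 2 ^ (3 * (A1.size + A2.size)) := Nat.pow_le_pow_right two_pos (by omega)
end
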